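/- arXiv:2211.06563 — 5 statements merged into one kernel-verified Lean document; each statement's English description precedes it below -/
import Mathlib

section
/- Let K be a field and let A be a right prolongable monomial algebra on generators x_1,…,x_d over K. The following are equivalent: (1) A is amenable as a right module over itself; (2) for every D ∈ ℕ there exists a nonzero monomial u of A such that there is at most one monomial v of length D with uv ≠ 0; (3) A has a Følner sequence as a right module over itself consisting of subspaces spanned by monomials (with respect to the generating subspace span_K{1, x_1,…,x_d}); (4) A is exhaustively amenable as a right module over itself. -/
noncomputable section

namespace Paper

open Module Filter MulOpposite

/-- The free associative unital `K`-algebra on a set `σ` of generators,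
realized as the monoid algebra of the free monoid on `σ`. -/
abbrev FreeAlg (K : Type) [Field K] (σ : Type) : Type := MonoidAlgebra K (FreeMonoid σ)

/-- The monomial of the free algebra corresponding to a word `w`. -/
def wrd (K : Type) [Field K] {σ : Type} (w : List σ) : FreeAlg K σ :=
  MonoidAlgebra.of K (FreeMonoid σ) (FreeMonoid.ofList w)

variable (K : Type) [Field K]

section Defs

variable {σ : Type} {A : Type} [Ring A] [Algebra K A]

/-- `a` is a monomial of `A` (i.e. the image of a word under the presentation `π`). -/
def IsMono (π : FreeAlg K σ →ₐ[K] A) (a : A) : Prop :=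
  ∃ w : List σ, a = π (wrd K w)

/-- `a` is a monomial of `A` of length `D`. -/
def IsMonoLen (π : FreeAlg K σ →ₐ[K] A) (D : ℕ) (a : A) : Prop :=
  ∃ w : List σ, w.length = D ∧ a = π (wrd K w)

/-- `π` presents `A` as a monomial algebra: `π` is onto and its kernel is spanned by the
monomials it contains (equivalently, it is generated as a two-sided ideal by monomials). -/
def MonomialPresentation (π : FreeAlg K σ →ₐ[K] A) : Prop :=
  Function.Surjective π ∧
    ∀ a : FreeAlg K σ, π a = 0 ↔
      a ∈ Submodule.span K {m : FreeAlg K σ | ∃ w : List σ, m = wrd K w ∧ π (wrd K w) = 0}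

/-- Every nonzero monomial of `A` is right prolongable. -/
def RightProlongable (π : FreeAlg K σ →ₐ[K] A) : Prop :=
  ∀ a : A, IsMono K π a → a ≠ 0 → ∃ w : List σ, w ≠ [] ∧ a * π (wrd K w) ≠ 0

/-- A subspace of `A` spanned by monomials. -/
def MonomialSubspace (π : FreeAlg K σ →ₐ[K] A) (L : Submodule K A) : Prop :=
  ∃ S : Set (List σ), L = Submodule.span K ((fun w => π (wrd K w)) '' S)

/-- The standard generating subspace, spanned by `1` together with the generators. -/
def genV (π : FreeAlg K σ →ₐ[K] A) : Submodule K A :=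
  Submodule.span K ({1} ∪ Set.range fun i : σ => π (wrd K [i]))

end Defs

section Amen

/-- `L` is a `(V, ε)`-invariant subspace of `A`, viewed as a right module over itself:
`dim (L·V) < (1+ε) · dim L`. -/
def RInv {A : Type} [Ring A] [Algebra K A] (L V : Submodule K A) (ε : ℝ) : Prop :=
  FiniteDimensional K L ∧ FiniteDimensional K (L * V : Submodule K A) ∧
    (finrank K (L * V : Submodule K A) : ℝ) < (1 + ε) * (finrank K L : ℝ)

/-- `L` is a `(V, ε)`-invariant subspace of `A`, viewed as a left module over itself. -/
def LInv {A : Type} [Ring A] [Algebra K A] (L V : Submodule K A) (ε : ℝ) : Prop :=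
  FiniteDimensional K L ∧ FiniteDimensional K (V * L : Submodule K A) ∧
    (finrank K (V * L : Submodule K A) : ℝ) < (1 + ε) * (finrank K L : ℝ)

/-- `A` is amenable as a right module over itself. -/
def RightSelfAmenable (A : Type) [Ring A] [Algebra K A] : Prop :=
  ∀ V : Submodule K A, FiniteDimensional K V → ∀ ε : ℝ, 0 < ε →
    ∃ L : Submodule K A, RInv K L V ε

/-- `A` is exhaustively amenable as a right module over itself. -/
def RightSelfExhAmenable (A : Type) [Ring A] [Algebra K A] : Prop :=
  ∀ V : Submodule K A, FiniteDimensional K V → ∀ ε : ℝ, 0 < ε →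
    ∀ W : Submodule K A, FiniteDimensional K W →
      ∃ L : Submodule K A, W ≤ L ∧ RInv K L V ε

/-- `A` is exhaustively amenable as a left module over itself. -/
def LeftSelfExhAmenable (A : Type) [Ring A] [Algebra K A] : Prop :=
  ∀ V : Submodule K A, FiniteDimensional K V → ∀ ε : ℝ, 0 < ε →
    ∀ W : Submodule K A, FiniteDimensional K W →
      ∃ L : Submodule K A, W ≤ L ∧ LInv K L V ε

/-- For a right `A`-module `M` (encoded via an `Aᵐᵒᵖ`-action), the subspace `L·V`,
spanned by `{ℓ·v : ℓ ∈ L, v ∈ V}`. -/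
def rLV {A M : Type} [Ring A] [Algebra K A] [AddCommGroup M] [Module K M] [Module Aᵐᵒᵖ M]
    (L : Submodule K M) (V : Submodule K A) : Submodule K M :=
  Submodule.span K {x : M | ∃ l ∈ L, ∃ v ∈ V, x = (op v) • l}

/-- `L` is a `(V, ε)`-invariant subspace of the right `A`-module `M`. -/
def RModInv {A M : Type} [Ring A] [Algebra K A] [AddCommGroup M] [Module K M] [Module Aᵐᵒᵖ M]
    (L : Submodule K M) (V : Submodule K A) (ε : ℝ) : Prop :=
  FiniteDimensional K L ∧ FiniteDimensional K (rLV K L V) ∧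
    (finrank K (rLV K L V) : ℝ) < (1 + ε) * (finrank K L : ℝ)

/-- The right `A`-module `M` is amenable. -/
def RModAmenable (A M : Type) [Ring A] [Algebra K A] [AddCommGroup M] [Module K M]
    [Module Aᵐᵒᵖ M] [IsScalarTower K Aᵐᵒᵖ M] : Prop :=
  ∀ V : Submodule K A, FiniteDimensional K V → ∀ ε : ℝ, 0 < ε →
    ∃ L : Submodule K M, RModInv K L V ε

/-- The right `A`-module `M` is exhaustively amenable. -/
def RModExhAmenable (A M : Type) [Ring A] [Algebra K A] [AddCommGroup M] [Module K M]
    [Module Aᵐᵒᵖ M] [IsScalarTower K Aᵐᵒᵖ M] : Prop :=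
  ∀ V : Submodule K A, FiniteDimensional K V → ∀ ε : ℝ, 0 < ε →
    ∀ W : Submodule K M, FiniteDimensional K W →
      ∃ L : Submodule K M, W ≤ L ∧ RModInv K L V ε

/-- For a left `A`-module `M`, the subspace `V·L`, spanned by `{v·ℓ : ℓ ∈ L, v ∈ V}`. -/
def lVL {A M : Type} [Ring A] [Algebra K A] [AddCommGroup M] [Module K M] [Module A M]
    (L : Submodule K M) (V : Submodule K A) : Submodule K M :=
  Submodule.span K {x : M | ∃ l ∈ L, ∃ v ∈ V, x = v • l}

/-- `L` is a `(V, ε)`-invariant subspace of the left `A`-module `M`. -/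
def LModInv {A M : Type} [Ring A] [Algebra K A] [AddCommGroup M] [Module K M] [Module A M]
    (L : Submodule K M) (V : Submodule K A) (ε : ℝ) : Prop :=
  FiniteDimensional K L ∧ FiniteDimensional K (lVL K L V) ∧
    (finrank K (lVL K L V) : ℝ) < (1 + ε) * (finrank K L : ℝ)

/-- The left `A`-module `M` is exhaustively amenable. -/
def LModExhAmenable (A M : Type) [Ring A] [Algebra K A] [AddCommGroup M] [Module K M]
    [Module A M] [IsScalarTower K A M] : Prop :=
  ∀ V : Submodule K A, FiniteDimensional K V → ∀ ε : ℝ, 0 < ε →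
    ∀ W : Submodule K M, FiniteDimensional K W →
      ∃ L : Submodule K M, W ≤ L ∧ LModInv K L V ε

/-- A Følner sequence for `A` as a right module over itself, with respect to the
generating subspace `V`. -/
def FolnerSeq {A : Type} [Ring A] [Algebra K A] (V : Submodule K A)
    (L : ℕ → Submodule K A) : Prop :=
  Monotone L ∧ (∀ n, FiniteDimensional K (L n)) ∧ (⨆ n, L n) = (⊤ : Submodule K A) ∧
    Tendsto (fun n => (finrank K (L n * V : Submodule K A) : ℝ) / (finrank K (L n) : ℝ))
      atTop (nhds 1)

/-- The isoperimetric profile of `A` with respect to `V`: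
`I(n) = inf {dim((W·V + W)/W) : dim W = n}`. -/
def isoProfile {A : Type} [Ring A] [Algebra K A] (V : Submodule K A) (n : ℕ) : ℕ :=
  sInf {k : ℕ | ∃ W : Submodule K A, FiniteDimensional K W ∧ finrank K W = n ∧
    FiniteDimensional K (W ⊔ W * V : Submodule K A) ∧
    k = finrank K (W ⊔ W * V : Submodule K A) - finrank K W}

end Amen

section Words

variable {σ : Type}

/-- The shift on bi-infinite words. -/
def shiftZ (s : ℤ → σ) : ℤ → σ := fun n => s (n + 1)

/-- The word `u` occurs in the bi-infinite word `s` at position `k`. -/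
def OccursAt (u : List σ) (s : ℤ → σ) (k : ℤ) : Prop :=
  ∀ i : Fin u.length, s (k + (i : ℕ)) = u.get i

/-- `u` is a (finite) factor of the bi-infinite word `s`. -/
def FactorZ (u : List σ) (s : ℤ → σ) : Prop := ∃ k : ℤ, OccursAt u s k

/-- `u` is a factor of the subshift `X`. -/
def FactorOfX (u : List σ) (X : Set (ℤ → σ)) : Prop := ∃ s ∈ X, FactorZ u s

/-- `s` is recurrent: every factor occurs at infinitely many positions. -/
def RecurrentZ (s : ℤ → σ) : Prop :=
  ∀ u : List σ, FactorZ u s → {k : ℤ | OccursAt u s k}.Infinite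

/-- `s` is uniformly recurrent: for every factor `u` there is `N` such that every
factor of `s` of length `N` contains an occurrence of `u`. -/
def UnifRecurrentZ (s : ℤ → σ) : Prop :=
  ∀ u : List σ, FactorZ u s → ∃ N : ℕ, ∀ v : List σ, FactorZ v s → v.length = N → u <:+: v

/-- `X ⊆ σ^ℤ` is a subshift: nonempty, closed and shift-invariant. -/
def IsSubshift [TopologicalSpace σ] (X : Set (ℤ → σ)) : Prop :=
  X.Nonempty ∧ IsClosed X ∧ ∀ s ∈ X, shiftZ s ∈ X

/-- `X` is a minimal subshift. -/
def IsMinimalSubshift [TopologicalSpace σ] (X : Set (ℤ → σ)) : Prop :=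
  IsSubshift X ∧
    ∀ Y : Set (ℤ → σ), Y ⊆ X → IsClosed Y → (∀ s ∈ Y, shiftZ s ∈ Y) → Y = ∅ ∨ Y = X

/-- `X` is a transitive subshift: some element has dense shift-orbit. -/
def IsTransitiveSubshift [TopologicalSpace σ] (X : Set (ℤ → σ)) : Prop :=
  IsSubshift X ∧ ∃ s ∈ X, closure {t : ℤ → σ | ∃ n : ℤ, t = fun m => s (m + n)} = X

/-- The word `u` occurs in the right-infinite word `s` at position `k`. -/
def OccursAtN (u : List σ) (s : ℕ → σ) (k : ℕ) : Prop :=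
  ∀ i : Fin u.length, s (k + (i : ℕ)) = u.get i

/-- `u` is a factor of the right-infinite word `s`. -/
def FactorN (u : List σ) (s : ℕ → σ) : Prop := ∃ k : ℕ, OccursAtN u s k

/-- A right-infinite word is uniformly recurrent. -/
def UnifRecurrentN (s : ℕ → σ) : Prop :=
  ∀ u : List σ, FactorN u s → ∃ N : ℕ, ∀ v : List σ, FactorN v s → v.length = N → u <:+: v

end Words

end Paper

/-!
(1) ⇒ (2): order the words by `wordCode`, which is compatible with appending a fixed word on
the right. If (2) fails for `D`, every nonzero monomial has two distinct nonzero extensions of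
length `D`. Multiplying an element of `L` with leading word `w` by these two extensions gives
elements with the distinct leading words `w s₁`, `w s₂`, so `dim (L · V_D) ≥ 2 dim L` for the
span `V_D` of the monomials of length `D`, and no subspace is `(V_D, 1/2)`-invariant.

(2) ⇒ (3): together with prolongability, (2) yields for every `D` words `a`, `e` with
`|e| = D` such that the nonzero extensions of `a` of length at most `D` are exactly the
prefixes of `e`. The monomials `a · e.take j` of this tube span a space of dimension `D + 1`
that right multiplication by the generators enlarges by at most `d` monomials. Adjoining the
tube to the words of bounded length gives almost invariant monomial subspaces exhausting `A`,
which are chained into a Følner sequence.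

(3) ⇒ (4): every finite-dimensional subspace lies in a power `V ^ k` of `V = span {1, xᵢ}`, and
`dim (L V ^ k) ≤ dim L + (dim (L V) - dim L) (dim V + 1) ^ k`.
-/

namespace Paper

open Module Submodule Filter

section WordCode

variable {d : ℕ}

/-- The word read as a base-`(d + 2)` numeral with digits `1, …, d`, last letter least
significant; as no digit is `0`, distinct words get distinct codes. -/
def wordCode (w : List (Fin d)) : ℕ :=
  Nat.ofDigits (d + 2) (w.reverse.map fun a => a.val + 1)

theorem wordCode_append (w s : List (Fin d)) :
    wordCode (w ++ s) = wordCode s + (d + 2) ^ s.length * wordCode w := by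
  simp only [wordCode, List.reverse_append, List.map_append, Nat.ofDigits_append,
    List.length_map, List.length_reverse]

theorem wordCode_injective : Function.Injective (wordCode (d := d)) := by
  have hdigits : ∀ w : List (Fin d),
      Nat.digits (d + 2) (wordCode w) = w.reverse.map fun a => a.val + 1 := by
    intro w
    refine Nat.digits_ofDigits _ (by omega) _ ?_ fun h => ?_
    · simp only [List.mem_map, List.mem_reverse]
      rintro _ ⟨a, -, rfl⟩
      omega
    · obtain ⟨a, -, ha⟩ := List.mem_map.mp (List.getLast_mem h)
      omega
  intro w v h
  have := hdigits w
  rw [h, hdigits v] at this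
  have hsucc : Function.Injective fun a : Fin d => a.val + 1 := fun a b hab => by
    simpa [Fin.val_inj] using hab
  exact List.reverse_injective (List.map_injective_iff.mpr hsucc this.symm)

theorem wordCode_append_le_append {w w' : List (Fin d)} (h : wordCode w ≤ wordCode w')
    (s : List (Fin d)) : wordCode (w ++ s) ≤ wordCode (w' ++ s) := by
  rw [wordCode_append, wordCode_append]
  gcongr

end WordCode

section LeadIndex

variable {K ι M α : Type*} [Field K] [AddCommGroup M] [Module K M] [LinearOrder α]
variable (b : Basis ι K M) (e : ι → α)

def IsLeadIndex (x : M) (i : ι) : Prop :=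
  i ∈ (b.repr x).support ∧ ∀ j ∈ (b.repr x).support, e j ≤ e i

theorem exists_finset_le_span_image (L : Submodule K M) [FiniteDimensional K L] :
    ∃ T : Finset ι, L ≤ span K (b '' T) := by
  classical
  obtain ⟨S, hS⟩ := (Module.Finite.iff_fg.mp inferInstance : L.FG)
  refine ⟨S.biUnion fun x => (b.repr x).support, ?_⟩
  rw [← hS, span_le]
  intro x hx
  rw [SetLike.mem_coe, b.mem_span_image, Finset.coe_biUnion]
  exact Set.subset_biUnion_of_mem (u := fun x => ((b.repr x).support : Set ι)) hx

theorem exists_isLeadIndex {x : M} (hx : x ≠ 0) : ∃ i, IsLeadIndex b e x i :=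
  Finset.exists_max_image _ e (Finsupp.support_nonempty_iff.mpr (by simpa using hx))

variable {b e} in
theorem linearIndependent_of_isLeadIndex (he : Function.Injective e) {κ : Type*} {y : κ → M}
    {m : κ → ι} (hm : Function.Injective m) (hy : ∀ k, IsLeadIndex b e (y k) (m k)) :
    LinearIndependent K y := by
  classical
  rw [linearIndependent_iff']
  intro s g hsum k hk
  by_contra hgk
  obtain ⟨j, hj, hjmax⟩ := Finset.exists_max_image (s.filter fun j => g j ≠ 0) (e ∘ m)
    ⟨k, Finset.mem_filter.mpr ⟨hk, hgk⟩⟩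
  obtain ⟨hjs, hgj⟩ := Finset.mem_filter.mp hj
  -- every other `y l` with `g l ≠ 0` has its lead below `m j`, hence no `m j`-coordinate
  have hcoord : b.repr (∑ l ∈ s, g l • y l) (m j) = g j * b.repr (y j) (m j) := by
    simp only [map_sum, map_smul, Finsupp.coe_finsetSum, Finset.sum_apply, Finsupp.smul_apply,
      smul_eq_mul]
    refine Finset.sum_eq_single_of_mem j hjs fun l hls hlj => ?_
    by_cases hgl : g l = 0
    · rw [hgl, zero_mul]
    rw [Finsupp.notMem_support_iff.mp fun hmem => hlj (hm (he (le_antisymm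
      (hjmax l (Finset.mem_filter.mpr ⟨hls, hgl⟩)) ((hy l).2 _ hmem)))), mul_zero]
  rw [hsum, map_zero, Finsupp.zero_apply, eq_comm, mul_eq_zero] at hcoord
  exact hcoord.elim hgj (Finsupp.mem_support_iff.mp (hy j).1)

theorem exists_finset_isLeadIndex (L : Submodule K M) [FiniteDimensional K L] :
    ∃ T : Finset ι, finrank K L ≤ T.card ∧ ∀ i ∈ T, ∃ x ∈ L, IsLeadIndex b e x i := by
  classical
  obtain ⟨T₀, hT₀⟩ := exists_finset_le_span_image b L
  set T := T₀.filter fun i => ∃ x ∈ L, IsLeadIndex b e x i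
  refine ⟨T, ?_, fun i hi => (Finset.mem_filter.mp hi).2⟩
  let restrict : L →ₗ[K] (T → K) :=
    LinearMap.pi fun i => Finsupp.lapply i.1 ∘ₗ b.repr.toLinearMap ∘ₗ L.subtype
  have hinj : Function.Injective restrict := by
    rw [← LinearMap.ker_eq_bot, LinearMap.ker_eq_bot']
    intro x hx
    by_contra hx0
    obtain ⟨i, hi⟩ := exists_isLeadIndex b e (x := (x : M)) (by simpa using hx0)
    have hiT : i ∈ T := Finset.mem_filter.mpr
      ⟨b.repr_support_subset_of_mem_span _ (hT₀ x.2) hi.1, x, x.2, hi⟩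
    exact Finsupp.mem_support_iff.mp hi.1 (congrFun hx ⟨i, hiT⟩)
  simpa using LinearMap.finrank_le_finrank_of_injective hinj

end LeadIndex

section SubspaceProducts

variable {K A : Type} [Field K] [Ring A] [Algebra K A]

instance finiteDimensional_mul (p q : Submodule K A) [FiniteDimensional K p]
    [FiniteDimensional K q] : FiniteDimensional K (p * q : Submodule K A) := by
  rw [← mulMap_range]
  infer_instance

theorem finrank_mul_le (p q : Submodule K A) [FiniteDimensional K p] [FiniteDimensional K q] :
    finrank K (p * q : Submodule K A) ≤ finrank K p * finrank K q := by
  rw [← mulMap_range, ← finrank_tensorProduct]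
  exact LinearMap.finrank_range_le _

instance finiteDimensional_pow (p : Submodule K A) [FiniteDimensional K p] (k : ℕ) :
    FiniteDimensional K (p ^ k : Submodule K A) :=
  Module.Finite.iff_fg.mpr ((Module.Finite.iff_fg.mp inferInstance).pow k)

theorem finrank_mul_le_of_le {M N : Submodule K A} (hMN : M ≤ N) (V : Submodule K A)
    [FiniteDimensional K N] [FiniteDimensional K V] :
    finrank K (N * V) ≤ finrank K (M * V) + (finrank K N - finrank K M) * finrank K V := by
  have := finiteDimensional_of_le hMN
  obtain ⟨C, hC⟩ := Submodule.exists_isCompl M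
  set B := C ⊓ N
  have hsup : M ⊔ B = N := by
    rw [← sup_inf_assoc_of_le C hMN, hC.sup_eq_top, top_inf_eq]
  have hinf : M ⊓ B = ⊥ :=
    eq_bot_iff.mpr ((inf_le_inf_left _ inf_le_left).trans hC.inf_eq_bot.le)
  have := finiteDimensional_of_le (inf_le_right : B ≤ N)
  have hrank := finrank_sup_add_finrank_inf_eq M B
  rw [hsup, hinf, finrank_bot, add_zero] at hrank
  have hsplit : N * V = M * V ⊔ B * V := by rw [← Submodule.sup_mul, hsup]
  have hB := finrank_mul_le B V
  have hNV := finrank_add_le_finrank_add_finrank (M * V) (B * V)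
  rw [← hsplit] at hNV
  rw [show finrank K N - finrank K M = finrank K B by omega]
  omega

theorem finrank_mul_pow_le {V : Submodule K A} (hV : 1 ∈ V) [FiniteDimensional K V]
    (L : Submodule K A) [FiniteDimensional K L] (k : ℕ) :
    finrank K (L * V ^ k) ≤
      finrank K L + (finrank K (L * V) - finrank K L) * (finrank K V + 1) ^ k := by
  induction k with
  | zero => rw [pow_zero, mul_one]; omega
  | succ k ih =>
    have hfg : finrank K L ≤ finrank K (L * V) :=
      finrank_mono (le_mul_of_one_le_right' (one_le.mpr hV))
    have hLk : L ≤ L * V ^ k := le_mul_of_one_le_right' (one_le_pow₀ (one_le.mpr hV))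
    have hstep := finrank_mul_le_of_le hLk V
    rw [pow_succ, ← mul_assoc]
    set X := (finrank K V + 1) ^ k
    have hX : 1 ≤ X := Nat.one_le_pow _ _ (Nat.succ_pos _)
    have hgX : finrank K (L * V) ≤ finrank K L + (finrank K (L * V) - finrank K L) * X := by
      nlinarith [Nat.sub_add_cancel hfg]
    calc finrank K (L * V ^ k * V)
        ≤ finrank K (L * V) + (finrank K (L * V ^ k) - finrank K L) * finrank K V := hstep
      _ ≤ finrank K (L * V) + (finrank K (L * V) - finrank K L) * X * finrank K V := by
          gcongr; omega
      _ ≤ finrank K L + (finrank K (L * V) - finrank K L) * (X * (finrank K V + 1)) := by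
          nlinarith

end SubspaceProducts

section MonomialBasis

variable (K : Type) [Field K] (σ : Type)

def wordBasis : Basis (List σ) K (FreeAlg K σ) :=
  (MonoidAlgebra.basis (FreeMonoid σ) K).reindex FreeMonoid.toList

theorem wordBasis_apply (w : List σ) : wordBasis K σ w = wrd K w := by
  simp [wordBasis, wrd]

variable {K σ}

theorem wrd_append (w v : List σ) : wrd K (w ++ v) = wrd K w * wrd K v := by
  unfold wrd; rw [← map_mul]; rfl

variable {A : Type} [Ring A] [Algebra K A] (π : FreeAlg K σ →ₐ[K] A)

theorem map_wrd_mul_map_wrd (w v : List σ) :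
    π (wrd K w) * π (wrd K v) = π (wrd K (w ++ v)) := by
  rw [wrd_append, map_mul]

theorem map_wrd_ne_zero_of_append_left {w v : List σ} (h : π (wrd K (w ++ v)) ≠ 0) :
    π (wrd K w) ≠ 0 :=
  left_ne_zero_of_mul (by rwa [map_wrd_mul_map_wrd])

theorem map_wrd_ne_zero_of_append_right {w v : List σ} (h : π (wrd K (w ++ v)) ≠ 0) :
    π (wrd K v) ≠ 0 :=
  right_ne_zero_of_mul (by rwa [map_wrd_mul_map_wrd])

theorem span_range_map_wrd (hπ : Function.Surjective π) :
    span K (Set.range fun w : List σ => π (wrd K w)) = ⊤ := by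
  have hwrd : wrd K = wordBasis K σ := funext fun w => (wordBasis_apply K σ w).symm
  rw [Set.range_comp' π (wrd K), ← AlgHom.coe_toLinearMap, ← map_span, hwrd,
    (wordBasis K σ).span_eq, Submodule.map_top]
  exact LinearMap.range_eq_top.mpr hπ

abbrev NonzeroWord : Type := {w : List σ // π (wrd K w) ≠ 0}

variable {π}

theorem ker_eq_span_wordBasis (hπ : MonomialPresentation K π) :
    LinearMap.ker π.toLinearMap = span K (wordBasis K σ '' {w | π (wrd K w) = 0}) := by
  ext a
  rw [LinearMap.mem_ker, AlgHom.toLinearMap_apply, hπ.2 a]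
  congr! 3
  ext m
  simp [wordBasis_apply, eq_comm, and_comm]

theorem linearIndependent_map_wrd (hπ : MonomialPresentation K π) :
    LinearIndependent K fun w : NonzeroWord π => π (wrd K w.1) := by
  have hbasis := (wordBasis K σ).linearIndependent.comp
    (Subtype.val : NonzeroWord π → List σ) Subtype.val_injective
  have hπb : (fun w : NonzeroWord π => π (wrd K w.1)) =
      π.toLinearMap ∘ wordBasis K σ ∘ Subtype.val :=
    funext fun w => by simp [wordBasis_apply]
  rw [hπb]
  refine hbasis.map ?_
  rw [ker_eq_span_wordBasis hπ, Set.range_comp]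
  exact (wordBasis K σ).linearIndependent.disjoint_span_image
    (Set.disjoint_left.mpr fun _ ⟨v, hv⟩ hw => v.2 (hv ▸ hw))

def monomialBasis (hπ : MonomialPresentation K π) : Basis (NonzeroWord π) K A :=
  Basis.mk (linearIndependent_map_wrd hπ) <| by
    rw [← span_range_map_wrd π hπ.1]
    refine span_le.mpr ?_
    rintro _ ⟨w, rfl⟩
    by_cases hw : π (wrd K w) = 0
    · simp only [hw]; exact zero_mem _
    · exact subset_span ⟨⟨w, hw⟩, rfl⟩

theorem monomialBasis_apply (hπ : MonomialPresentation K π) (w : NonzeroWord π) :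
    monomialBasis hπ w = π (wrd K w.1) :=
  Basis.mk_apply _ _ _

theorem map_wrd_injOn (hπ : MonomialPresentation K π) :
    Set.InjOn (fun w => π (wrd K w)) {w : List σ | π (wrd K w) ≠ 0} := fun w hw v hv h =>
  congrArg Subtype.val ((linearIndependent_map_wrd hπ).injective (a₁ := ⟨w, hw⟩) (a₂ := ⟨v, hv⟩) h)

end MonomialBasis

section RightMultiplication

variable {K : Type} [Field K] {σ A : Type} [Ring A] [Algebra K A] {π : FreeAlg K σ →ₐ[K] A}
variable (hπ : MonomialPresentation K π)

theorem monomialBasis_repr_map_wrd (w : NonzeroWord π) :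
    (monomialBasis hπ).repr (π (wrd K w.1)) = Finsupp.single w 1 := by
  rw [← monomialBasis_apply hπ, Basis.repr_self]

theorem monomialBasis_repr_mul_map_wrd (x : A) (s : List σ) :
    (monomialBasis hπ).repr (x * π (wrd K s)) =
      ((monomialBasis hπ).repr x).sum fun w c =>
        c • (monomialBasis hπ).repr (π (wrd K (w.1 ++ s))) := by
  conv_lhs => rw [← (monomialBasis hπ).linearCombination_repr x]
  simp only [Finsupp.linearCombination_apply, Finsupp.sum_mul, map_finsuppSum, smul_mul_assoc,
    monomialBasis_apply, map_wrd_mul_map_wrd, map_smul]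

theorem exists_eq_append_of_mem_support_repr_mul {x : A} {s : List σ} {t : NonzeroWord π}
    (ht : t ∈ ((monomialBasis hπ).repr (x * π (wrd K s))).support) :
    ∃ w ∈ ((monomialBasis hπ).repr x).support, t.1 = w.1 ++ s := by
  classical
  rw [monomialBasis_repr_mul_map_wrd] at ht
  obtain ⟨w, hw, hwt⟩ := Finset.mem_biUnion.mp (Finsupp.support_sum ht)
  refine ⟨w, hw, ?_⟩
  replace hwt := Finsupp.support_smul hwt
  by_cases h : π (wrd K (w.1 ++ s)) = 0
  · simp [h] at hwt
  · rw [monomialBasis_repr_map_wrd hπ ⟨_, h⟩] at hwt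
    rw [Finset.mem_singleton.mp (Finsupp.support_single_subset hwt)]

theorem monomialBasis_repr_mul_map_wrd_apply (x : A) {s : List σ} (w : NonzeroWord π)
    (h : π (wrd K (w.1 ++ s)) ≠ 0) :
    (monomialBasis hπ).repr (x * π (wrd K s)) ⟨w.1 ++ s, h⟩ = (monomialBasis hπ).repr x w := by
  classical
  rw [monomialBasis_repr_mul_map_wrd, Finsupp.sum_apply, Finsupp.sum_eq_single w _ (by simp)]
  · rw [monomialBasis_repr_map_wrd hπ ⟨_, h⟩, Finsupp.smul_apply, Finsupp.single_eq_same,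
      smul_eq_mul, mul_one]
  intro v _ hvw
  by_cases hv : π (wrd K (v.1 ++ s)) = 0
  · simp [hv]
  rw [monomialBasis_repr_map_wrd hπ ⟨_, hv⟩, Finsupp.smul_apply, Finsupp.single_eq_of_ne,
    smul_zero]
  intro heq
  exact hvw (Subtype.ext (List.append_cancel_right (congrArg Subtype.val heq).symm))

end RightMultiplication

section Doubling

variable {K : Type} [Field K] {d : ℕ} {A : Type} [Ring A] [Algebra K A]
variable {π : FreeAlg K (Fin d) →ₐ[K] A}

theorem isLeadIndex_mul_map_wrd (hπ : MonomialPresentation K π) {x : A} {w : NonzeroWord π}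
    (hx : IsLeadIndex (monomialBasis hπ) (wordCode ∘ Subtype.val) x w) {s : List (Fin d)}
    (h : π (wrd K (w.1 ++ s)) ≠ 0) :
    IsLeadIndex (monomialBasis hπ) (wordCode ∘ Subtype.val) (x * π (wrd K s)) ⟨w.1 ++ s, h⟩ := by
  refine ⟨?_, fun t ht => ?_⟩
  · rw [Finsupp.mem_support_iff, monomialBasis_repr_mul_map_wrd_apply]
    exact Finsupp.mem_support_iff.mp hx.1
  · obtain ⟨v, hv, htv⟩ := exists_eq_append_of_mem_support_repr_mul hπ ht
    simp only [Function.comp_apply, htv]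
    exact wordCode_append_le_append (hx.2 v hv) s

variable (π) in
def lenSpan (D : ℕ) : Submodule K A :=
  span K ((fun w => π (wrd K w)) '' {w : List (Fin d) | w.length = D})

instance (D : ℕ) : FiniteDimensional K (lenSpan π D) :=
  FiniteDimensional.span_of_finite K ((List.finite_length_eq (Fin d) D).image _)

theorem two_mul_finrank_le_finrank_mul_lenSpan (hπ : MonomialPresentation K π) {D : ℕ}
    (hD : ∀ w : NonzeroWord π, ∃ s : Bool → List (Fin d), Function.Injective s ∧
      ∀ i, (s i).length = D ∧ π (wrd K (w.1 ++ s i)) ≠ 0)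
    (L : Submodule K A) [FiniteDimensional K L] :
    2 * finrank K L ≤ finrank K (L * lenSpan π D) := by
  obtain ⟨T, hcard, hT⟩ := exists_finset_isLeadIndex (monomialBasis hπ) (wordCode ∘ Subtype.val) L
  choose x hxL hxlead using hT
  choose s hsinj hs using fun w : T => hD w.1
  let y : T × Bool → A := fun p => x p.1 p.1.2 * π (wrd K (s p.1 p.2))
  let m : T × Bool → NonzeroWord π := fun p => ⟨p.1.1.1 ++ s p.1 p.2, (hs p.1 p.2).2⟩
  have hm : Function.Injective m := by
    rintro ⟨w, i⟩ ⟨w', i'⟩ h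
    obtain ⟨hww', hss'⟩ := List.append_inj' (congrArg Subtype.val h)
      ((hs w i).1.trans (hs w' i').1.symm)
    obtain rfl : w = w' := Subtype.ext (Subtype.ext hww')
    exact Prod.ext rfl (hsinj w hss')
  have hy : LinearIndependent K y :=
    linearIndependent_of_isLeadIndex (wordCode_injective.comp Subtype.val_injective) hm
      fun p => isLeadIndex_mul_map_wrd hπ (hxlead p.1 p.1.2) _
  have hyL : span K (Set.range y) ≤ L * lenSpan π D := span_le.mpr <| by
    rintro _ ⟨p, rfl⟩
    exact mul_mem_mul (hxL _ _) (subset_span ⟨_, (hs p.1 p.2).1, rfl⟩)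
  calc 2 * finrank K L
      ≤ Fintype.card (T × Bool) := by
        simp only [Fintype.card_prod, Fintype.card_coe, Fintype.card_bool]; omega
    _ = finrank K (span K (Set.range y)) := (finrank_span_eq_card hy).symm
    _ ≤ finrank K (L * lenSpan π D) := finrank_mono hyL

theorem exists_subsingleton_extensions_of_rightSelfAmenable (hπ : MonomialPresentation K π)
    (ham : RightSelfAmenable K A) (D : ℕ) :
    ∃ u : A, IsMono K π u ∧ u ≠ 0 ∧ {v : A | IsMonoLen K π D v ∧ u * v ≠ 0}.Subsingleton := by
  by_contra! h
  have hD : ∀ w : NonzeroWord π, ∃ s : Bool → List (Fin d), Function.Injective s ∧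
      ∀ i, (s i).length = D ∧ π (wrd K (w.1 ++ s i)) ≠ 0 := by
    intro w
    obtain ⟨_, ⟨⟨s₁, hs₁, rfl⟩, h₁⟩, _, ⟨⟨s₂, hs₂, rfl⟩, h₂⟩, hne⟩ := h _ ⟨w.1, rfl⟩ w.2
    rw [map_wrd_mul_map_wrd] at h₁ h₂
    refine ⟨(cond · s₁ s₂), Bool.injective_iff.mpr fun h => hne (by simp_all), ?_⟩
    rintro (_ | _) <;> simp [*]
  obtain ⟨L, hL, -, hLV⟩ := ham (lenSpan π D) inferInstance (1 / 2) (by norm_num)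
  have hdouble : (2 * finrank K L : ℝ) ≤ finrank K (L * lenSpan π D) := by
    exact_mod_cast two_mul_finrank_le_finrank_mul_lenSpan hπ hD L
  have : (0 : ℝ) ≤ finrank K L := Nat.cast_nonneg _
  linarith

end Doubling

section GeneratingSubspace

variable {K : Type} [Field K] {σ A : Type} [Ring A] [Algebra K A] (π : FreeAlg K σ →ₐ[K] A)

theorem one_mem_genV : (1 : A) ∈ genV K π :=
  subset_span (Set.mem_union_left _ rfl)

instance [Finite σ] : FiniteDimensional K (genV K π) :=
  FiniteDimensional.span_of_finite K ((Set.finite_singleton 1).union (Set.finite_range _))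

theorem map_wrd_mem_genV_pow (w : List σ) : π (wrd K w) ∈ genV K π ^ w.length := by
  induction w using List.reverseRecOn with
  | nil =>
    rw [show wrd K ([] : List σ) = 1 from map_one _, map_one, List.length_nil, pow_zero]
    exact one_le.mp le_rfl
  | append_singleton w i ih =>
    rw [← map_wrd_mul_map_wrd, List.length_append, List.length_singleton, pow_succ]
    exact mul_mem_mul ih (subset_span (Set.mem_union_right _ ⟨i, rfl⟩))

theorem iSup_genV_pow (hπ : Function.Surjective π) : ⨆ k, genV K π ^ k = ⊤ := by
  refine eq_top_iff.mpr ((span_range_map_wrd π hπ).ge.trans (span_le.mpr ?_))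
  rintro _ ⟨w, rfl⟩
  exact mem_iSup_of_mem w.length (map_wrd_mem_genV_pow π w)

end GeneratingSubspace

section MonomialSpans

variable {K : Type} [Field K] {σ A : Type} [Ring A] [Algebra K A] {π : FreeAlg K σ →ₐ[K] A}

variable (π) in
def monoSpan (S : Finset (List σ)) : Submodule K A :=
  span K ((fun w => π (wrd K w)) '' S)

instance (S : Finset (List σ)) : FiniteDimensional K (monoSpan π S) :=
  FiniteDimensional.span_of_finite K (S.finite_toSet.image _)

theorem monoSpan_mono {S S' : Finset (List σ)} (h : S ⊆ S') : monoSpan π S ≤ monoSpan π S' :=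
  span_mono (Set.image_mono h)

theorem monoSpan_union [DecidableEq σ] (S S' : Finset (List σ)) :
    monoSpan π (S ∪ S') = monoSpan π S ⊔ monoSpan π S' := by
  rw [monoSpan, Finset.coe_union, Set.image_union, span_union]
  rfl

theorem finrank_monoSpan_le (S : Finset (List σ)) : finrank K (monoSpan π S) ≤ S.card := by
  classical
  rw [monoSpan, ← Finset.coe_image]
  exact (finrank_span_finset_le_card _).trans Finset.card_image_le

theorem finrank_monoSpan_of_ne_zero (hπ : MonomialPresentation K π) {S : Finset (List σ)}
    (hS : ∀ w ∈ S, π (wrd K w) ≠ 0) : finrank K (monoSpan π S) = S.card := by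
  have hindep : LinearIndependent K fun w : S => π (wrd K w.1) :=
    (linearIndependent_map_wrd hπ).comp (fun w : S => (⟨w.1, hS w.1 w.2⟩ : NonzeroWord π))
      fun w v h => Subtype.ext (congrArg (fun w : NonzeroWord π => w.1) h :)
  have hrange : Set.range (fun w : S => π (wrd K w.1)) = (fun w => π (wrd K w)) '' S := by
    ext; simp
  rw [monoSpan, ← hrange, finrank_span_eq_card hindep, Fintype.card_coe]

theorem monoSpan_mul_genV_le {S S' : Finset (List σ)} (hS : S ⊆ S')
    (h : ∀ w ∈ S, ∀ i, π (wrd K (w ++ [i])) = 0 ∨ w ++ [i] ∈ S') :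
    monoSpan π S * genV K π ≤ monoSpan π S' := by
  rw [monoSpan, genV, span_mul_span, span_le]
  rintro _ ⟨_, ⟨w, hw, rfl⟩, g, hg, rfl⟩
  rcases hg with rfl | ⟨i, rfl⟩ <;> dsimp only
  · rw [mul_one]
    exact subset_span ⟨w, hS hw, rfl⟩
  · rw [map_wrd_mul_map_wrd]
    rcases h w hw i with h0 | hmem
    · rw [h0]; exact zero_mem _
    · exact subset_span ⟨_, hmem, rfl⟩

end MonomialSpans

section WordsUpTo

variable {K : Type} [Field K] {σ A : Type} [Ring A] [Algebra K A] {π : FreeAlg K σ →ₐ[K] A}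
variable [Finite σ]

variable (σ) in
def wordsUpTo (k : ℕ) : Finset (List σ) := (List.finite_length_le σ k).toFinset

theorem mem_wordsUpTo {k : ℕ} {w : List σ} : w ∈ wordsUpTo σ k ↔ w.length ≤ k :=
  Set.Finite.mem_toFinset _

theorem monotone_monoSpan_wordsUpTo : Monotone fun k => monoSpan π (wordsUpTo σ k) :=
  fun _ _ hkl => monoSpan_mono fun _ hw => mem_wordsUpTo.mpr ((mem_wordsUpTo.mp hw).trans hkl)

theorem iSup_monoSpan_wordsUpTo (hπ : Function.Surjective π) :
    ⨆ k, monoSpan π (wordsUpTo σ k) = ⊤ := by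
  refine eq_top_iff.mpr ((span_range_map_wrd π hπ).ge.trans (span_le.mpr ?_))
  rintro _ ⟨w, rfl⟩
  exact mem_iSup_of_mem w.length (subset_span ⟨w, mem_wordsUpTo.mpr le_rfl, rfl⟩)

theorem monoSpan_wordsUpTo_mul_genV_le (k : ℕ) :
    monoSpan π (wordsUpTo σ k) * genV K π ≤ monoSpan π (wordsUpTo σ (k + 1)) := by
  refine monoSpan_mul_genV_le (fun w hw => ?_) fun w hw i => .inr ?_ <;>
    simp only [mem_wordsUpTo, List.length_append, List.length_singleton] at hw ⊢ <;> omega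

end WordsUpTo

section Extensions

variable {K : Type} [Field K] {σ A : Type} [Ring A] [Algebra K A] {π : FreeAlg K σ →ₐ[K] A}

theorem RightProlongable.exists_append_ne_zero (hprol : RightProlongable K π) {w : List σ}
    (hw : π (wrd K w) ≠ 0) (k : ℕ) : ∃ t : List σ, t.length = k ∧ π (wrd K (w ++ t)) ≠ 0 := by
  induction k with
  | zero => exact ⟨[], rfl, by simpa using hw⟩
  | succ k ih =>
    obtain ⟨t, rfl, ht⟩ := ih
    obtain ⟨_ | ⟨i, v⟩, hv, hne⟩ := hprol _ ⟨_, rfl⟩ ht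
    · exact absurd rfl hv
    refine ⟨t ++ [i], by simp, map_wrd_ne_zero_of_append_left π (v := v) ?_⟩
    simpa [map_wrd_mul_map_wrd] using hne

theorem exists_unique_extension (hπ : MonomialPresentation K π) (hprol : RightProlongable K π)
    (h2 : ∀ D : ℕ, ∃ u : A, IsMono K π u ∧ u ≠ 0 ∧
      {v : A | IsMonoLen K π D v ∧ u * v ≠ 0}.Subsingleton) (D : ℕ) :
    ∃ a e : List σ, e.length = D ∧ π (wrd K (a ++ e)) ≠ 0 ∧
      ∀ s : List σ, s.length ≤ D → π (wrd K (a ++ s)) ≠ 0 → s <+: e := by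
  obtain ⟨_, ⟨a, rfl⟩, ha, huniq⟩ := h2 D
  obtain ⟨e, he, hae⟩ := hprol.exists_append_ne_zero ha D
  refine ⟨a, e, he, hae, fun s hs has => ?_⟩
  obtain ⟨t, ht, hast⟩ := hprol.exists_append_ne_zero has (D - s.length)
  rw [List.append_assoc] at hast
  have hst : s ++ t = e :=
    map_wrd_injOn hπ (map_wrd_ne_zero_of_append_right π hast)
      (map_wrd_ne_zero_of_append_right π hae)
      (huniq ⟨⟨_, by simp only [List.length_append, ht]; omega, rfl⟩, by rwa [map_wrd_mul_map_wrd]⟩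
        ⟨⟨e, he, rfl⟩, by rwa [map_wrd_mul_map_wrd]⟩)
  exact ⟨t, hst⟩

end Extensions

section Tubes

variable {K : Type} [Field K] {σ A : Type} [Ring A] [Algebra K A] {π : FreeAlg K σ →ₐ[K] A}
variable [DecidableEq σ]

def tube (a e : List σ) : Finset (List σ) :=
  (Finset.range (e.length + 1)).image fun j => a ++ e.take j

theorem card_tube (a e : List σ) : (tube a e).card = e.length + 1 := by
  rw [tube, Finset.card_image_of_injOn, Finset.card_range]
  intro j hj j' hj' h
  have := congrArg List.length (List.append_cancel_left h)
  simp only [Finset.coe_range, Set.mem_Iio] at hj hj'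
  simp only [List.length_take] at this
  omega

theorem finrank_monoSpan_tube (hπ : MonomialPresentation K π) {a e : List σ}
    (hae : π (wrd K (a ++ e)) ≠ 0) : finrank K (monoSpan π (tube a e)) = e.length + 1 := by
  rw [finrank_monoSpan_of_ne_zero hπ, card_tube]
  simp only [tube, Finset.mem_image]
  rintro _ ⟨j, -, rfl⟩
  refine map_wrd_ne_zero_of_append_left π (v := e.drop j) ?_
  rwa [List.append_assoc, List.take_append_drop]

theorem monoSpan_tube_mul_genV_le [Fintype σ] {a e : List σ}
    (huniq : ∀ s : List σ, s.length ≤ e.length → π (wrd K (a ++ s)) ≠ 0 → s <+: e) :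
    monoSpan π (tube a e) * genV K π ≤
      monoSpan π (tube a e ∪ Finset.univ.image fun i => a ++ e ++ [i]) := by
  refine monoSpan_mul_genV_le Finset.subset_union_left fun w hw i => ?_
  obtain ⟨j, hj, rfl⟩ := Finset.mem_image.mp hw
  rw [Finset.mem_range] at hj
  refine or_iff_not_imp_left.mpr fun hne => ?_
  simp only [Finset.mem_union, tube, Finset.mem_image, Finset.mem_range, Finset.mem_univ,
    true_and]
  rcases Nat.lt_or_ge j e.length with hje | hje
  · have hlen : (e.take j ++ [i]).length ≤ e.length := by
      rw [List.length_append, List.length_take, List.length_singleton]; omega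
    have hpre := huniq (e.take j ++ [i]) hlen (by simpa using hne)
    refine .inl ⟨j + 1, by omega, ?_⟩
    rw [List.append_assoc, List.prefix_iff_eq_take.mp hpre]
    simp only [List.length_append, List.length_take, List.length_singleton]
    congr 2
    omega
  · refine .inr ⟨i, ?_⟩
    rw [List.take_of_length_le hje]

end Tubes

section Folner

variable {K A : Type} [Field K] [Ring A] [Algebra K A]

theorem exists_le_of_iSup_eq_top {E : ℕ → Submodule K A} (hE : Monotone E)
    (htop : ⨆ n, E n = ⊤) (W : Submodule K A) [FiniteDimensional K W] : ∃ n, W ≤ E n := by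
  obtain ⟨s, hs⟩ := CompleteLattice.IsCompactElement.exists_finset_of_le_iSup _
    ((fg_iff_compact W).mp (Module.Finite.iff_fg.mp inferInstance)) E (htop ▸ le_top)
  exact ⟨s.sup id, hs.trans (iSup₂_le fun i hi => hE (Finset.le_sup (f := id) hi))⟩

theorem RInv.one_le_div_and_div_lt {L V : Submodule K A} {ε : ℝ} (h : RInv K L V ε)
    (hV : 1 ∈ V) :
    1 ≤ (finrank K (L * V) : ℝ) / finrank K L ∧
      (finrank K (L * V) : ℝ) / finrank K L < 1 + ε := by
  obtain ⟨_, _, hlt⟩ := h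
  have hpos : (0 : ℝ) < finrank K L := by
    by_contra! h0
    have : (finrank K L : ℝ) = 0 := le_antisymm h0 (Nat.cast_nonneg _)
    rw [this, mul_zero] at hlt
    exact absurd hlt (not_lt.mpr (Nat.cast_nonneg _))
  refine ⟨(one_le_div hpos).mpr ?_, (div_lt_iff₀ hpos).mpr hlt⟩
  exact_mod_cast finrank_mono (le_mul_of_one_le_right' (one_le.mpr hV))

theorem exists_folnerSeq_of_forall_rInv {V : Submodule K A} (hV : 1 ∈ V)
    {E : ℕ → Submodule K A} (hE : Monotone E) (htop : ⨆ n, E n = ⊤)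
    (P : Submodule K A → Prop) (h : ∀ k, ∀ ε > 0, ∃ L, P L ∧ E k ≤ L ∧ RInv K L V ε) :
    ∃ L : ℕ → Submodule K A, (∀ n, P (L n)) ∧ FolnerSeq K V L := by
  choose F hFP hEF hF using fun k (n : ℕ) => h k (1 / (n + 1)) Nat.one_div_pos_of_nat
  have (k n : ℕ) : FiniteDimensional K (F k n) := (hF k n).1
  choose G hG using fun k n => exists_le_of_iSup_eq_top hE htop (F k n)
  -- `idx (n + 1)` is chosen so large that `F (idx n) n ≤ E (idx (n + 1))`
  let idx : ℕ → ℕ := fun n => Nat.rec 0 (fun n i => max (i + 1) (G i n)) n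
  have hidx_succ (n : ℕ) : idx (n + 1) = max (idx n + 1) (G (idx n) n) := rfl
  have hidx (n : ℕ) : n ≤ idx n := by
    induction n with
    | zero => exact Nat.zero_le _
    | succ n ih => rw [hidx_succ]; omega
  refine ⟨fun n => F (idx n) n, fun n => hFP _ _, ?_, fun n => (hF _ _).1, ?_, ?_⟩
  · refine monotone_nat_of_le_succ fun n => (hG _ _).trans ((hE ?_).trans (hEF _ _))
    rw [hidx_succ]
    exact le_max_right _ _
  · exact eq_top_iff.mpr (htop.ge.trans (iSup_mono fun n => (hE (hidx n)).trans (hEF _ _)))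
  · have hlim : Tendsto (fun n : ℕ => 1 + 1 / ((n : ℝ) + 1)) atTop (nhds 1) := by
      simpa using tendsto_const_nhds.add (tendsto_one_div_add_atTop_nhds_zero_nat (𝕜 := ℝ))
    exact tendsto_of_tendsto_of_tendsto_of_le_of_le tendsto_const_nhds hlim
      (fun n => ((hF _ n).one_le_div_and_div_lt hV).1)
      (fun n => ((hF _ n).one_le_div_and_div_lt hV).2.le)

end Folner

section RigidImpliesFolner

variable {K : Type} [Field K] {σ A : Type} [Ring A] [Algebra K A] {π : FreeAlg K σ →ₐ[K] A}
variable [Fintype σ] [DecidableEq σ]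

/-- The witness is the span of the words of length at most `k` and of a long tube: right
multiplication by `genV` only adds words of length `k + 1` and the words just beyond the end
of the tube. -/
theorem exists_monomialSubspace_rInv (hπ : MonomialPresentation K π)
    (hext : ∀ D : ℕ, ∃ a e : List σ, e.length = D ∧ π (wrd K (a ++ e)) ≠ 0 ∧
      ∀ s : List σ, s.length ≤ D → π (wrd K (a ++ s)) ≠ 0 → s <+: e)
    (k : ℕ) (ε : ℝ) (hε : 0 < ε) :
    ∃ L, MonomialSubspace K π L ∧ monoSpan π (wordsUpTo σ k) ≤ L ∧ RInv K L (genV K π) ε := by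
  set C := finrank K (monoSpan π (wordsUpTo σ (k + 1))) + Fintype.card σ
  obtain ⟨D, hD⟩ := exists_nat_gt (C / ε)
  obtain ⟨a, e, rfl, hae, huniq⟩ := hext D
  set S := wordsUpTo σ k ∪ tube a e
  have hlow : e.length + 1 ≤ finrank K (monoSpan π S) :=
    finrank_monoSpan_tube hπ hae ▸ finrank_mono (monoSpan_mono Finset.subset_union_right)
  have hmul : monoSpan π S * genV K π ≤ monoSpan π (wordsUpTo σ (k + 1)) ⊔
      monoSpan π (tube a e ∪ Finset.univ.image fun i => a ++ e ++ [i]) := by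
    rw [monoSpan_union, Submodule.sup_mul]
    exact sup_le_sup (monoSpan_wordsUpTo_mul_genV_le k) (monoSpan_tube_mul_genV_le huniq)
  have hbdry : finrank K (monoSpan π (tube a e ∪ Finset.univ.image fun i => a ++ e ++ [i])) ≤
      e.length + 1 + Fintype.card σ :=
    (finrank_monoSpan_le _).trans ((Finset.card_union_le _ _).trans
      (add_le_add (card_tube a e).le (Finset.card_image_le.trans Finset.card_univ.le)))
  have hup : finrank K (monoSpan π S * genV K π) ≤ C + (e.length + 1) :=
    (finrank_mono hmul).trans ((finrank_add_le_finrank_add_finrank _ _).trans (by omega))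
  refine ⟨monoSpan π S, ⟨S, rfl⟩, monoSpan_mono Finset.subset_union_left, inferInstance,
    inferInstance, ?_⟩
  have hC : (C : ℝ) < ε * finrank K (monoSpan π S) := by
    rw [div_lt_iff₀ hε] at hD
    have : (e.length : ℝ) ≤ finrank K (monoSpan π S) := by exact_mod_cast (by omega : _ ≤ _)
    nlinarith
  have : (finrank K (monoSpan π S * genV K π) : ℝ) ≤ C + finrank K (monoSpan π S) := by
    exact_mod_cast (by omega : _ ≤ _)
  linarith

end RigidImpliesFolner

section ExhaustiveAmenability

variable {K A : Type} [Field K] [Ring A] [Algebra K A]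

theorem rightSelfExhAmenable_of_folnerSeq {V : Submodule K A} (hV : 1 ∈ V)
    [FiniteDimensional K V] (hgen : ⨆ k, V ^ k = ⊤) {L : ℕ → Submodule K A}
    (hL : FolnerSeq K V L) : RightSelfExhAmenable K A := by
  obtain ⟨hmono, hfd, htop, htend⟩ := hL
  intro U _ ε hε W _
  obtain ⟨k, hUk⟩ := exists_le_of_iSup_eq_top (pow_right_mono₀ (one_le.mpr hV)) hgen U
  obtain ⟨m, hWm⟩ := exists_le_of_iSup_eq_top hmono htop W
  set C : ℕ := (finrank K V + 1) ^ k
  have hC : (0 : ℝ) < C := by positivity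
  obtain ⟨n, hn, hmn⟩ := ((htend.eventually (Ioo_mem_nhds (by norm_num : (1 : ℝ) / 2 < 1)
    (lt_add_of_pos_right 1 (div_pos hε hC)))).and (eventually_ge_atTop m)).exists
  have := hfd n
  set f := finrank K (L n)
  set g := finrank K (L n * V)
  have hf : (0 : ℝ) < f := by
    by_contra! h0
    rw [le_antisymm h0 (Nat.cast_nonneg _), div_zero] at hn
    linarith [hn.1]
  have hg : (g : ℝ) < (1 + ε / C) * f := (div_lt_iff₀ hf).mp hn.2
  have hfg : f ≤ g := finrank_mono (le_mul_of_one_le_right' (one_le.mpr hV))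
  have hgrowth : finrank K (L n * U) ≤ f + (g - f) * C :=
    (finrank_mono (mul_le_mul' le_rfl hUk)).trans (finrank_mul_pow_le hV (L n) k)
  refine ⟨L n, hWm.trans (hmono hmn), hfd n, inferInstance, ?_⟩
  have hgrowth' : (finrank K (L n * U) : ℝ) ≤ f + (g - f) * C := by
    have := (Nat.cast_le (α := ℝ)).mpr hgrowth
    rwa [Nat.cast_add, Nat.cast_mul, Nat.cast_sub hfg] at this
  calc (finrank K (L n * U) : ℝ) ≤ f + (g - f) * C := hgrowth'
    _ < f + ε / C * f * C := by gcongr; linarith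
    _ = (1 + ε) * f := by field_simp

end ExhaustiveAmenability

theorem stmt0_general (K : Type) [Field K] (d : ℕ)
    (A : Type) [Ring A] [Algebra K A] (π : FreeAlg K (Fin d) →ₐ[K] A)
    (hπ : MonomialPresentation K π) (hprol : RightProlongable K π) :
    [ RightSelfAmenable K A,
      ∀ D : ℕ, ∃ u : A, IsMono K π u ∧ u ≠ 0 ∧
        {v : A | IsMonoLen K π D v ∧ u * v ≠ 0}.Subsingleton,
      ∃ L : ℕ → Submodule K A, (∀ n, MonomialSubspace K π (L n)) ∧ FolnerSeq K (genV K π) L,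
      RightSelfExhAmenable K A ].TFAE := by
  tfae_have 1 → 2 := exists_subsingleton_extensions_of_rightSelfAmenable hπ
  tfae_have 2 → 3 := fun h2 =>
    exists_folnerSeq_of_forall_rInv (one_mem_genV π) monotone_monoSpan_wordsUpTo
      (iSup_monoSpan_wordsUpTo hπ.1) _
      (exists_monomialSubspace_rInv hπ (exists_unique_extension hπ hprol h2))
  tfae_have 3 → 4 := fun ⟨_, _, hL⟩ =>
    rightSelfExhAmenable_of_folnerSeq (one_mem_genV π) (iSup_genV_pow π hπ.1) hL
  tfae_have 4 → 1 := fun h4 V hV ε hε => (h4 V hV ε hε ⊥ inferInstance).imp fun _ => And.right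
  tfae_finish

/-- Theorem: combinatorial characterization of amenability of right
prolongable monomial algebras. For a right prolongable monomial algebra `A` on generators
`x_1, …, x_d` over a field `K`, the following are equivalent:
(1) `A` is amenable as a right module over itself;
(2) for every `D ∈ ℕ` there is a nonzero monomial `u` of `A` with at most one length-`D`
monomial `v` such that `u * v ≠ 0`;
(3) `A` has a Følner sequence (with respect to `span {1, x_1, …, x_d}`) consisting of
subspaces spanned by monomials;
(4) `A` is exhaustively amenable as a right module over itself. -/
theorem stmt0 (K : Type) [Field K] (d : ℕ) (hd : 1 ≤ d)
    (A : Type) [Ring A] [Algebra K A] (π : FreeAlg K (Fin d) →ₐ[K] A)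
    (hπ : MonomialPresentation K π) (hprol : RightProlongable K π) :
    [ RightSelfAmenable K A,
      ∀ D : ℕ, ∃ u : A, IsMono K π u ∧ u ≠ 0 ∧
        {v : A | IsMonoLen K π D v ∧ u * v ≠ 0}.Subsingleton,
      ∃ L : ℕ → Submodule K A, (∀ n, MonomialSubspace K π (L n)) ∧ FolnerSeq K (genV K π) L,
      RightSelfExhAmenable K A ].TFAE :=
  stmt0_general K d A π hπ hprol

end Paper
end
end

section
/- Let W ∈ Σ^ℤ be a uniformly recurrent bi-infinite word over a finite alphabet Σ. Then for every D ∈ ℕ there exists a finite factor u of W for which there is a unique word v of length D over Σ such that the concatenation uv is a factor of W. -/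
noncomputable section

/-!
Induct on `D`, keeping the factor `u` nonempty. Given a nonempty factor `y` with a unique
extension `v` of length `D`, choose among the factors that begin with `y` and contain no other
occurrence of `y` one of maximal length `Y` (uniform recurrence bounds their length). Any factor
`Y ++ [a]` still begins with `y`, so by maximality it contains a second occurrence of `y`, which
must be a suffix. Hence every extension of `Y` of length `D + 1` is the last letter of `y`
followed by `v`.
-/

namespace List

variable {α : Type*}

theorem IsInfix.isSuffix_concat_of_not_isInfix {l s : List α} {a : α} (h : l <:+: s ++ [a])
    (hs : ¬ l <:+: s) : l <:+ s ++ [a] :=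
  (infix_concat_iff.1 h).resolve_right hs

theorem not_isInfix_tail_self {l : List α} (hl : l ≠ []) : ¬ l <:+: l.tail := fun h => by
  have := h.length_le
  cases l <;> simp_all

end List

namespace Paper

variable {σ : Type} {W : ℤ → σ} {u s t r : List σ} {k : ℤ}

def segment (W : ℤ → σ) (k : ℤ) (m : ℕ) : List σ := List.ofFn fun i : Fin m => W (k + i)

theorem occursAt_segment (W : ℤ → σ) (k : ℤ) (m : ℕ) : OccursAt (segment W k m) W k := by
  intro ⟨i, hi⟩
  simp [segment]

theorem OccursAt.append_segment (h : OccursAt s W k) (m : ℕ) :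
    OccursAt (s ++ segment W (k + s.length) m) W k := by
  intro ⟨i, hi⟩
  by_cases his : i < s.length
  · simpa [List.getElem_append_left his] using h ⟨i, his⟩
  · have := occursAt_segment W (k + s.length) m ⟨i - s.length, by simp at hi; omega⟩
    simp only [List.get_eq_getElem, List.getElem_append_right (Nat.le_of_not_lt his)] at this ⊢
    rw [← this]
    congr 1
    omega

theorem OccursAt.infix (h : OccursAt (s ++ t ++ r) W k) : OccursAt t W (k + s.length) := by
  intro ⟨i, hi⟩
  have := h ⟨s.length + i, by simp; omega⟩
  simp only [List.get_eq_getElem, List.append_assoc,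
    List.getElem_append_right (Nat.le_add_right s.length i), Nat.add_sub_cancel_left,
    List.getElem_append_left hi] at this ⊢
  rw [← this]
  congr 1
  push_cast
  ring

theorem FactorZ.of_isInfix (h : FactorZ t W) (hst : s <:+: t) : FactorZ s W := by
  obtain ⟨k, hk⟩ := h
  obtain ⟨p, q, rfl⟩ := hst
  exact ⟨_, hk.infix⟩

theorem FactorZ.exists_append (h : FactorZ s W) (m : ℕ) :
    ∃ v : List σ, v.length = m ∧ FactorZ (s ++ v) W := by
  obtain ⟨k, hk⟩ := h
  exact ⟨segment W (k + s.length) m, by simp [segment], k, hk.append_segment m⟩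

theorem UnifRecurrentZ.exists_isInfix_of_length_le (hW : UnifRecurrentZ W) (hu : FactorZ u W) :
    ∃ N : ℕ, ∀ z : List σ, FactorZ z W → N ≤ z.length → u <:+: z := by
  obtain ⟨N, hN⟩ := hW u hu
  refine ⟨N, fun z hz hNz => ?_⟩
  have hpre : z.take N <+: z := List.take_prefix N z
  exact (hN _ (hz.of_isInfix hpre.isInfix) (by simpa using hNz)).trans hpre.isInfix

theorem exists_factor_forcing_suffix (hW : UnifRecurrentZ W) {y : List σ} (hy : y ≠ [])
    (hyf : FactorZ y W) :
    ∃ Y : List σ, Y ≠ [] ∧ FactorZ Y W ∧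
      ∀ a : σ, FactorZ (Y ++ [a]) W → y <:+ Y ++ [a] := by
  classical
  let S : List σ → Prop := fun Z => FactorZ Z W ∧ y <+: Z ∧ ¬ y <:+: Z.tail
  obtain ⟨N, hN⟩ := hW.exists_isInfix_of_length_le hyf
  have hS_length : ∀ Z, S Z → Z.length ≤ N := fun Z ⟨hZ, _, hyZ⟩ => by
    by_contra! hlt
    exact hyZ (hN _ (hZ.of_isInfix (List.tail_suffix Z).isInfix) (by simp; omega))
  have hSy : S y := ⟨hyf, List.prefix_refl y, List.not_isInfix_tail_self hy⟩
  let P : ℕ → Prop := fun m => ∃ Z, Z.length = m ∧ S Z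
  obtain ⟨Y, hYlen, hYf, hyY, hyYt⟩ : P (Nat.findGreatest P N) :=
    Nat.findGreatest_spec (hS_length y hSy) ⟨y, rfl, hSy⟩
  have hYne : Y ≠ [] := fun h => hy (List.prefix_nil.1 (h ▸ hyY))
  refine ⟨Y, hYne, hYf, fun a hYa => ?_⟩
  have hyYa : y <:+: Y.tail ++ [a] := by
    rw [← List.tail_append_of_ne_nil hYne]
    by_contra hyYat
    have hSYa : S (Y ++ [a]) := ⟨hYa, hyY.trans (List.prefix_append Y [a]), hyYat⟩
    exact Nat.findGreatest_is_greatest (P := P) (by simp; omega) (hS_length _ hSYa)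
      ⟨Y ++ [a], rfl, hSYa⟩
  exact (hyYa.isSuffix_concat_of_not_isInfix hyYt).trans
    (List.suffix_append_self_iff.2 (List.tail_suffix Y))

theorem unique_extension_succ {y Y : List σ} {D : ℕ} (hy : y ≠ [])
    (hyD : ∃! v : List σ, v.length = D ∧ FactorZ (y ++ v) W) (hYf : FactorZ Y W)
    (hYy : ∀ a : σ, FactorZ (Y ++ [a]) W → y <:+ Y ++ [a]) :
    ∃! x : List σ, x.length = D + 1 ∧ FactorZ (Y ++ x) W := by
  obtain ⟨v, -, hv⟩ := hyD
  have hext : ∀ x : List σ, x.length = D + 1 → FactorZ (Y ++ x) W →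
      x = y.getLast hy :: v := by
    rintro (_ | ⟨a, x⟩) hx hYx
    · simp at hx
    have hYa : y <:+ Y ++ [a] :=
      hYy a (hYx.of_isInfix (by simpa using (List.prefix_append (Y ++ [a]) x).isInfix))
    obtain ⟨t, rfl, -⟩ := (List.suffix_concat_iff.1 hYa).resolve_left hy
    have hyx : FactorZ (t ++ [a] ++ x) W :=
      hYx.of_isInfix (by simpa using (List.suffix_append_self_iff.2 hYa).isInfix)
    simp [hv x ⟨by simpa using hx, hyx⟩]
  obtain ⟨x, hx, hYx⟩ := hYf.exists_append (D + 1)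
  exact ⟨x, ⟨hx, hYx⟩, fun x' ⟨hx', hYx'⟩ =>
    (hext x' hx' hYx').trans (hext x hx hYx).symm⟩

theorem UnifRecurrentZ.exists_unique_extension (hW : UnifRecurrentZ W) (D : ℕ) :
    ∃ u : List σ, u ≠ [] ∧ FactorZ u W ∧
      ∃! v : List σ, v.length = D ∧ FactorZ (u ++ v) W := by
  induction D with
  | zero =>
    refine ⟨segment W 0 1, by simp [segment], ⟨0, occursAt_segment W 0 1⟩, [], ?_, ?_⟩
    · simpa using ⟨0, occursAt_segment W 0 1⟩
    · exact fun v ⟨hv, _⟩ => List.eq_nil_of_length_eq_zero hv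
  | succ D ih =>
    obtain ⟨y, hy, hyf, hyD⟩ := ih
    obtain ⟨Y, hY, hYf, hYy⟩ := exists_factor_forcing_suffix hW hy hyf
    exact ⟨Y, hY, hYf, unique_extension_succ hy hyD hYf hYy⟩

theorem stmt5_general (σ : Type) (W : ℤ → σ) (hW : UnifRecurrentZ W) (D : ℕ) :
    ∃ u : List σ, FactorZ u W ∧ ∃! v : List σ, v.length = D ∧ FactorZ (u ++ v) W := by
  obtain ⟨u, -, hu⟩ := hW.exists_unique_extension D
  exact ⟨u, hu⟩

/-- key combinatorial lemma. Let `W ∈ Σ^ℤ` be a uniformly recurrent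
bi-infinite word over a finite alphabet `Σ`. Then for every `D ∈ ℕ` there is a finite
factor `u` of `W` for which there is a unique word `v` of length `D` such that `u ++ v`
is a factor of `W`. -/
theorem stmt5 (σ : Type) [Fintype σ] (W : ℤ → σ) (hW : UnifRecurrentZ W) (D : ℕ) :
    ∃ u : List σ, FactorZ u W ∧ ∃! v : List σ, v.length = D ∧ FactorZ (u ++ v) W :=
  stmt5_general σ W hW D

end Paper
end
end

section
/- There exists a recurrent bi-infinite word Ω over the four-letter alphabet {w, x, y, z} such that: (i) for every finite factor u of Ω, both uw and uz are factors of Ω (so every factor has at least two distinct one-letter right extensions); and (ii) for every D ∈ ℕ there exists a finite factor u of Ω such that exactly one word v of length D has vu a factor of Ω (a factor with a unique length-D left extension). In particular, such Ω can be taken so that its set of finite factors is the set of all words over {w,x,y,z} avoiding every factor of the form V x y^{2i} x with i ≥ 1, |V| ≤ 2i+2, and V not a suffix of w z^{2i} w. -/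
/-!
The language `lang9` is factorial, and any two of its words `u`, `v` can be joined by a nonempty
bridge: a letter `w`, followed by the part of `w z^{2j} w` missing in front of the first
occurrence of `x y^{2j} x` in `v`. Since `w` and `z` never occur in `x y^{2j} x`, the bridge
creates no new forbidden factor. For any such language, the nested words
`Wₙ₊₁ = eₙ t Wₙ t' eₙ`, where `(eₙ)` lists the language with every word infinitely often and
`t`, `t'` are bridges, grow on both sides; their limit is recurrent and its factors are exactly
the words of the language. Appending `w` or `z` creates no forbidden factor, and `x y^{2D} x`
has a unique left extension of length `D`, the last `D` letters of `w z^{2D} w`.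
-/

noncomputable section

namespace Paper

/-- The language of all words over the alphabet `{w, x, y, z}` (encoded as
`w = 0, x = 1, y = 2, z = 3` in `Fin 4`) avoiding every factor of the form
`V x y^{2i} x` with `i ≥ 1`, `|V| ≤ 2i + 2` and `V` not a suffix of `w z^{2i} w`. -/
def lang9 (u : List (Fin 4)) : Prop :=
  ∀ i : ℕ, 1 ≤ i → ∀ V : List (Fin 4), V.length ≤ 2 * i + 2 →
    ¬ V <:+ ([0] ++ List.replicate (2 * i) 3 ++ [0]) →
    ¬ (V ++ [1] ++ List.replicate (2 * i) 2 ++ [1]) <:+: u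

section ListLemmas

variable {α : Type}

lemma append_append_eq_cases_of_disjoint {a x b u t v : List α}
    (h : a ++ x ++ b = u ++ t ++ v) (hx : x ≠ []) (ht : t ≠ []) (hxt : x.Disjoint t) :
    (∃ r, u = a ++ x ++ r) ∨ ∃ r, a = u ++ t ++ r ∧ v = r ++ x ++ b := by
  simp only [List.append_assoc] at h ⊢
  rcases List.append_eq_append_iff.mp h with ⟨e, rfl, he⟩ | ⟨e, rfl, he⟩
  · rcases List.append_eq_append_iff.mp he with ⟨f, rfl, -⟩ | ⟨f, rfl, hf⟩
    · exact Or.inl ⟨f, rfl⟩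
    · obtain _ | ⟨f₀, f⟩ := f
      · exact Or.inl ⟨[], by simp⟩
      · obtain _ | ⟨t₀, t⟩ := t
        · exact absurd rfl ht
        · obtain ⟨rfl, -⟩ := List.cons_eq_cons.mp (by simpa using hf)
          exact absurd (by simp) (hxt (a := t₀) (by simp))
  · rcases List.append_eq_append_iff.mp he with ⟨f, rfl, rfl⟩ | ⟨f, rfl, hf⟩
    · exact Or.inr ⟨f, by simp, rfl⟩
    · obtain _ | ⟨f₀, f⟩ := f
      · exact Or.inr ⟨[], by simp, by simpa using hf.symm⟩
      · obtain _ | ⟨x₀, x⟩ := x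
        · exact absurd rfl hx
        · obtain ⟨rfl, -⟩ := List.cons_eq_cons.mp (by simpa using hf)
          exact absurd (by simp) (hxt (a := x₀) (by simp))

lemma forall_suffix_length_le_iff {a p : List α} :
    (∀ V, V <:+ a → V.length ≤ p.length → V <:+ p) ↔ a <:+ p ∨ p <:+ a := by
  constructor
  · intro h
    rcases le_total a.length p.length with hap | hpa
    · exact Or.inl (h a List.suffix_rfl hap)
    · have hV : a.drop (a.length - p.length) <:+ a := List.drop_suffix _ _
      have hVp := h _ hV (by simp; omega)
      exact Or.inr (List.IsSuffix.eq_of_length hVp (by simp; omega) ▸ hV)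
  · rintro (hap | hpa) V hVa hV
    · exact hVa.trans hap
    · exact List.suffix_of_suffix_length_le hVa hpa hV

lemma takeWhile_append_cons {p : α → Bool} {l r : List α} {x : α} (hl : ∀ c ∈ l, p c)
    (hx : p x = false) : (l ++ x :: r).takeWhile p = l := by
  simp [List.takeWhile_append_of_pos hl, hx]

end ListLemmas

section Realization

variable {α : Type}

lemma OccursAt.of_eq_append {s : ℤ → α} {w p u q : List α} {c : ℤ} (h : OccursAt w s c)
    (hw : w = p ++ u ++ q) : OccursAt u s (c + p.length) := by
  subst hw
  intro i
  have := h ⟨p.length + i, by simp; omega⟩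
  simp only [List.get_eq_getElem, List.append_assoc] at this ⊢
  rw [List.getElem_append_right (by omega), List.getElem_append_left (by simp)] at this
  simpa [add_assoc] using this

lemma OccursAt.apply_eq_of_occursAt {s s' : ℤ → α} {w : List α} {c k : ℤ} (h : OccursAt w s c)
    (h' : OccursAt w s' c) (hck : c ≤ k) (hkw : k < c + w.length) : s k = s' k := by
  have hi : (k - c).toNat < w.length := by omega
  have e : c + ((k - c).toNat : ℕ) = k := by omega
  have := (h ⟨_, hi⟩).trans (h' ⟨_, hi⟩).symm
  rwa [e] at this

lemma OccursAt.infix_of_occursAt {s : ℤ → α} {w u : List α} {c k : ℤ} (hw : OccursAt w s c)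
    (hu : OccursAt u s k) (hck : c ≤ k) (hkw : k + u.length ≤ c + w.length) : u <:+: w := by
  have hu_eq : u = (w.drop (k - c).toNat).take u.length := by
    apply List.ext_getElem (by simp; omega)
    intro i hi _
    have hwi := hw ⟨(k - c).toNat + i, by omega⟩
    have hui := hu ⟨i, hi⟩
    have e : c + (((k - c).toNat + i : ℕ) : ℤ) = k + (i : ℕ) := by omega
    simp only [List.get_eq_getElem, e] at hwi hui
    simp [← hui, hwi]
  rw [hu_eq]
  exact (List.take_prefix _ _).isInfix.trans (List.drop_suffix _ _).isInfix

variable [Inhabited α]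

def place (w : List α) (c : ℤ) : ℤ → α := fun k => w.getD (k - c).toNat default

lemma occursAt_place (w : List α) (c : ℤ) : OccursAt w (place w c) c := by
  intro i
  simp [place]

end Realization

-- Bridges are nonempty so that the approximations below grow on both sides.
structure IsIrreducibleLanguage {α : Type} (L : List α → Prop) : Prop where
  nil : L []
  of_infix : ∀ {u v : List α}, u <:+: v → L v → L u
  bridge : ∀ {u v : List α}, L u → L v → ∃ t, t ≠ [] ∧ L (u ++ t ++ v)

namespace IsIrreducibleLanguage

variable {α : Type} {L : List α → Prop} (hL : IsIrreducibleLanguage L)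

def bridgeWord (u v : {w : List α // L w}) : List α := (hL.bridge u.2 v.2).choose

def join (u v : {w : List α // L w}) : {w : List α // L w} :=
  ⟨u ++ hL.bridgeWord u v ++ v, (hL.bridge u.2 v.2).choose_spec.2⟩

lemma bridgeWord_ne_nil (u v : {w : List α // L w}) : hL.bridgeWord u v ≠ [] :=
  (hL.bridge u.2 v.2).choose_spec.1

variable [Encodable α]

open Classical in
def enum (L : List α → Prop) (n : ℕ) : List α :=
  match Encodable.decode (α := List α) n.unpair.1 with
  | some u => if L u then u else []
  | none => []

lemma exists_enum_eq {u : List α} (hu : L u) (N : ℕ) : ∃ n ≥ N, enum L n = u :=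
  ⟨Nat.pair (Encodable.encode u) N, Nat.right_le_pair _ _, by simp [enum, hu]⟩

def entry (n : ℕ) : {w : List α // L w} :=
  ⟨enum L n, by
    unfold enum
    split
    · split_ifs with h
      · exact h
      · exact hL.nil
    · exact hL.nil⟩

def approx : ℕ → {w : List α // L w}
  | 0 => ⟨[], hL.nil⟩
  | n + 1 => hL.join (hL.join (hL.entry n) (approx n)) (hL.entry n)

-- `approx n` will sit at position `-offset n` of the limit word.
def offset : ℕ → ℕ
  | 0 => 0
  | n + 1 => offset n + (enum L n ++ hL.bridgeWord (hL.entry n) (hL.approx n)).length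

lemma approx_succ (n : ℕ) : ∃ pre post : List α,
    (hL.approx (n + 1) : List α) = pre ++ hL.approx n ++ post ∧
      hL.offset (n + 1) = hL.offset n + pre.length ∧ enum L n <+: pre ∧
      0 < pre.length ∧ 0 < post.length := by
  refine ⟨enum L n ++ hL.bridgeWord (hL.entry n) (hL.approx n),
    hL.bridgeWord (hL.join (hL.entry n) (hL.approx n)) (hL.entry n) ++ enum L n,
    by simp [approx, join, entry], rfl, List.prefix_append _ _, ?_, ?_⟩ <;>
  simp [List.length_pos_iff, bridgeWord_ne_nil]

lemma offset_growth (n : ℕ) :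
    n ≤ hL.offset n ∧ hL.offset n + n ≤ (hL.approx n : List α).length := by
  induction n with
  | zero => simp [offset]
  | succ n ih =>
    obtain ⟨pre, post, happrox, hoffset, -, hpre, hpost⟩ := hL.approx_succ n
    rw [happrox, hoffset]
    simp only [List.length_append]
    omega

lemma exists_approx_eq_append {n m : ℕ} (h : n ≤ m) : ∃ pre post : List α,
    (hL.approx m : List α) = pre ++ hL.approx n ++ post ∧
      hL.offset m = hL.offset n + pre.length := by
  induction m, h using Nat.le_induction with
  | base => exact ⟨[], [], by simp, by simp⟩
  | succ m _ ih =>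
    obtain ⟨pre, post, happrox, hoffset⟩ := ih
    obtain ⟨pre', post', happrox', hoffset', -⟩ := hL.approx_succ m
    refine ⟨pre' ++ pre, post ++ post', ?_, ?_⟩
    · simp [happrox', happrox]
    · simp only [hoffset', hoffset, List.length_append]
      ring

lemma mem_window {n : ℕ} {k : ℤ} (hk : k.natAbs < n) :
    -(hL.offset n : ℤ) ≤ k ∧ k < -(hL.offset n : ℤ) + (hL.approx n : List α).length := by
  have := hL.offset_growth n
  omega

variable [Inhabited α]

def placed (n : ℕ) : ℤ → α := place (hL.approx n : List α) (-hL.offset n)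

lemma placed_eq_of_le {n m : ℕ} (h : n ≤ m) {k : ℤ} (hk₁ : -(hL.offset n : ℤ) ≤ k)
    (hk₂ : k < -(hL.offset n : ℤ) + (hL.approx n : List α).length) :
    hL.placed m k = hL.placed n k := by
  obtain ⟨pre, post, happrox, hoffset⟩ := hL.exists_approx_eq_append h
  have hocc :=
    (occursAt_place (hL.approx m : List α) (-hL.offset m)).of_eq_append happrox
  have hpos : -(hL.offset m : ℤ) + pre.length = -hL.offset n := by
    rw [hoffset]; push_cast; ring
  rw [hpos] at hocc
  exact hocc.apply_eq_of_occursAt (occursAt_place _ _) hk₁ hk₂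

def limit (k : ℤ) : α := hL.placed (k.natAbs + 1) k

lemma occursAt_limit (n : ℕ) : OccursAt (hL.approx n : List α) hL.limit (-hL.offset n) := by
  intro i
  set k : ℤ := -(hL.offset n : ℤ) + (i : ℕ)
  have hN := hL.mem_window (n := k.natAbs + 1) (Nat.lt_succ_self _)
  have hlimit : hL.limit k = hL.placed n k := by
    rcases le_total n (k.natAbs + 1) with h | h
    · exact hL.placed_eq_of_le h (by omega) (by omega)
    · exact (hL.placed_eq_of_le h hN.1 hN.2).symm
  exact hlimit.trans (occursAt_place _ _ i)

lemma factorZ_limit_iff {u : List α} :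
    FactorZ u hL.limit ↔ ∃ n, u <:+: (hL.approx n : List α) := by
  constructor
  · rintro ⟨k, hk⟩
    refine ⟨k.natAbs + u.length + 1, (hL.occursAt_limit _).infix_of_occursAt hk ?_ ?_⟩ <;>
    · have := hL.offset_growth (k.natAbs + u.length + 1)
      omega
  · rintro ⟨n, p, q, hpq⟩
    exact ⟨_, (hL.occursAt_limit n).of_eq_append hpq.symm⟩

lemma factorZ_limit_iff_mem {u : List α} : FactorZ u hL.limit ↔ L u := by
  rw [hL.factorZ_limit_iff]
  constructor
  · rintro ⟨n, hn⟩
    exact hL.of_infix hn (hL.approx n).2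
  · intro hu
    obtain ⟨n, -, rfl⟩ := exists_enum_eq hu 0
    obtain ⟨pre, post, happrox, -, ⟨r, rfl⟩, -⟩ := hL.approx_succ n
    exact ⟨n + 1, [], r ++ hL.approx n ++ post, by simp [happrox]⟩

lemma recurrentZ_limit : RecurrentZ hL.limit := by
  intro u hu
  apply Set.infinite_of_forall_exists_lt
  intro K
  obtain ⟨n, hn, rfl⟩ := exists_enum_eq (hL.factorZ_limit_iff_mem.mp hu) K.natAbs
  obtain ⟨pre, post, happrox, -, ⟨r, rfl⟩, -⟩ := hL.approx_succ n
  refine ⟨-hL.offset (n + 1), ?_, ?_⟩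
  · simpa using (hL.occursAt_limit (n + 1)).of_eq_append (p := [])
      (q := r ++ (hL.approx n : List α) ++ post) (by simp [happrox])
  · have := (hL.offset_growth (n + 1)).1
    omega

end IsIrreducibleLanguage

theorem IsIrreducibleLanguage.exists_recurrentZ_factorZ_iff {α : Type} [Encodable α]
    [Inhabited α] {L : List α → Prop} (hL : IsIrreducibleLanguage L) :
    ∃ Ω : ℤ → α, RecurrentZ Ω ∧ ∀ u, FactorZ u Ω ↔ L u :=
  ⟨hL.limit, hL.recurrentZ_limit, fun _ => hL.factorZ_limit_iff_mem⟩

def xyyx (j : ℕ) : List (Fin 4) := [1] ++ List.replicate (2 * j) 2 ++ [1]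

def wzzw (j : ℕ) : List (Fin 4) := [0] ++ List.replicate (2 * j) 3 ++ [0]

lemma wzzw_length (j : ℕ) : (wzzw j).length = 2 * j + 2 := by simp [wzzw]

lemma wzzw_subset (j : ℕ) : wzzw j ⊆ [0, 3] := by
  intro c hc
  simp only [wzzw, List.mem_append, List.mem_replicate] at hc
  simp only [List.mem_cons]
  aesop

lemma xyyx_ne_nil (j : ℕ) : xyyx j ≠ [] := by simp [xyyx]

lemma xyyx_disjoint {t : List (Fin 4)} (ht : t ⊆ [0, 3]) (j : ℕ) : (xyyx j).Disjoint t := by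
  intro c hc hct
  have := ht hct
  simp only [xyyx, List.mem_append, List.mem_replicate, List.mem_cons] at hc this
  aesop

lemma count_one_xyyx (j : ℕ) : (xyyx j).count 1 = 2 := by
  simp [xyyx, List.count_eq_zero, List.mem_replicate]

lemma takeWhile_append_xyyx {a b : List (Fin 4)} (ha : a ⊆ [0, 3]) (j : ℕ) :
    (a ++ xyyx j ++ b).takeWhile (· != 1) = a := by
  rw [List.append_assoc]
  refine takeWhile_append_cons (fun c hc => ?_) (by decide)
  have := ha hc
  simp only [List.mem_cons] at this
  aesop

lemma eq_of_xyyx_append_eq {j j' : ℕ} {b b' : List (Fin 4)}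
    (h : xyyx j ++ b = xyyx j' ++ b') : j = j' := by
  have h' : List.replicate (2 * j) 2 ++ 1 :: b = List.replicate (2 * j') 2 ++ 1 :: b' := by
    simpa [xyyx] using h
  have hrep := congrArg (List.takeWhile (· != (1 : Fin 4))) h'
  rw [takeWhile_append_cons (by simp) (by decide),
    takeWhile_append_cons (by simp) (by decide)] at hrep
  simpa using congrArg List.length hrep

-- An occurrence of `x y^{2j} x` preceded only by `w`'s and `z`'s starts at the first `x`.
lemma eq_of_append_xyyx_eq {a a' b b' : List (Fin 4)} {j j' : ℕ}
    (h : a ++ xyyx j ++ b = a' ++ xyyx j' ++ b') (ha : a ⊆ [0, 3]) (ha' : a' ⊆ [0, 3]) :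
    a = a' ∧ j = j' := by
  have haa' : a = a' := by
    rw [← takeWhile_append_xyyx ha j (b := b), h, takeWhile_append_xyyx ha']
  subst haa'
  simp only [List.append_assoc] at h
  exact ⟨rfl, eq_of_xyyx_append_eq (List.append_cancel_left h)⟩

lemma lang9_iff {u : List (Fin 4)} : lang9 u ↔
    ∀ j, 1 ≤ j → ∀ a b, u = a ++ xyyx j ++ b → a <:+ wzzw j ∨ wzzw j <:+ a := by
  simp only [← forall_suffix_length_le_iff, wzzw_length]
  constructor
  · intro h j hj a b hu V ⟨s, hs⟩ hV
    by_contra hVp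
    exact h j hj V hV hVp ⟨s, b, by simp [hu, ← hs, xyyx]⟩
  · rintro h j hj V hV hVp ⟨s, b, hu⟩
    exact hVp (h j hj (s ++ V) b (by simp [← hu, xyyx]) V (List.suffix_append _ _) hV)

lemma lang9_of_infix {u v : List (Fin 4)} (huv : u <:+: v) (hv : lang9 v) : lang9 u :=
  fun i hi V hV hVp hinf => hv i hi V hV hVp (hinf.trans huv)

def IsGuarded (v : List (Fin 4)) : Prop :=
  ∀ j, 1 ≤ j → ∀ a b, v = a ++ xyyx j ++ b → wzzw j <:+ a

lemma IsGuarded.lang9 {v : List (Fin 4)} (hv : IsGuarded v) : lang9 v :=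
  lang9_iff.mpr fun j hj a b h => Or.inr (hv j hj a b h)

lemma isGuarded_nil : IsGuarded [] := by
  intro j _ a b h
  simp [xyyx] at h

lemma lang9_append_of_isGuarded {u t v : List (Fin 4)} (hu : lang9 u) (hv : IsGuarded v)
    (ht : t ≠ []) (ht03 : t ⊆ [0, 3]) : lang9 (u ++ t ++ v) := by
  refine lang9_iff.mpr fun j hj a b h => ?_
  rcases append_append_eq_cases_of_disjoint h.symm (xyyx_ne_nil j) ht (xyyx_disjoint ht03 j)
    with ⟨r, hur⟩ | ⟨r, rfl, hvr⟩
  · exact lang9_iff.mp hu j hj a r hur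
  · exact Or.inr ((hv j hj r b hvr).trans (List.suffix_append _ _))

-- Prepend the part of `w z^{2j} w` missing before the first `x y^{2j} x` of `v`.
lemma exists_isGuarded_append {v : List (Fin 4)} (hv : lang9 v) :
    ∃ c, c ⊆ [0, 3] ∧ IsGuarded (c ++ v) := by
  by_cases hg : IsGuarded v
  · exact ⟨[], List.nil_subset _, hg⟩
  simp only [IsGuarded, not_forall] at hg
  obtain ⟨j, hj, a, b, rfl, haj⟩ := hg
  obtain ⟨c, hc⟩ := (lang9_iff.mp hv j hj a b rfl).resolve_right haj
  have hca : c ++ a ⊆ [0, 3] := hc ▸ wzzw_subset j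
  have hc03 : c ⊆ [0, 3] := fun x hx => hca (List.mem_append_left a hx)
  have ha03 : a ⊆ [0, 3] := fun x hx => hca (List.mem_append_right c hx)
  refine ⟨c, hc03, fun j' hj' a' b' h => ?_⟩
  have hcne : c ≠ [] := by rintro rfl; exact haj (by simp [← hc])
  rcases append_append_eq_cases_of_disjoint (u := []) (by simpa using h.symm)
    (xyyx_ne_nil j') hcne (xyyx_disjoint hc03 j') with ⟨r, hr⟩ | ⟨r, rfl, hvr⟩
  · simp [xyyx] at hr
  replace hvr : a ++ xyyx j ++ b = r ++ xyyx j' ++ b' := by simpa using hvr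
  rcases lang9_iff.mp hv j' hj' r b' hvr with hr | hr
  · obtain ⟨rfl, rfl⟩ :=
      eq_of_append_xyyx_eq hvr.symm (fun x hx => wzzw_subset j' (hr.subset hx)) ha03
    simp [hc]
  · exact hr.trans (by simp)

lemma lang9_isIrreducibleLanguage : IsIrreducibleLanguage lang9 where
  nil := isGuarded_nil.lang9
  of_infix := lang9_of_infix
  bridge {u v} hu hv := by
    obtain ⟨c, hc03, hc⟩ := exists_isGuarded_append hv
    refine ⟨0 :: c, List.cons_ne_nil _ _, ?_⟩
    simpa using lang9_append_of_isGuarded hu hc (t := [0]) (by simp) (by simp)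

lemma lang9_append_singleton {u : List (Fin 4)} (hu : lang9 u) {c : Fin 4} (hc : c ∈ [0, 3]) :
    lang9 (u ++ [c]) := by
  simpa using lang9_append_of_isGuarded hu isGuarded_nil (t := [c]) (by simp) (by simpa using hc)

lemma isGuarded_wzzw_append_xyyx (D : ℕ) : IsGuarded (wzzw D ++ xyyx D) := by
  intro j _ a b h
  rcases append_append_eq_cases_of_disjoint (u := []) (by simpa using h.symm) (xyyx_ne_nil j)
    (by simp [wzzw]) (xyyx_disjoint (wzzw_subset D) j) with ⟨r, hr⟩ | ⟨r, rfl, hr⟩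
  · simp [xyyx] at hr
  obtain rfl : r = [] := by
    obtain _ | ⟨r₀, r⟩ := r
    · rfl
    -- `x y^{2D} x` has only two `x`'s, so `x y^{2j} x` cannot start after its first letter.
    have hr₀ : r₀ = 1 := by simpa [xyyx] using (congrArg List.head? hr).symm
    have := congrArg (List.count 1) hr
    simp [count_one_xyyx, hr₀] at this
    omega
  obtain rfl := eq_of_xyyx_append_eq (j := j) (j' := D) (b' := [])
    (by simpa using hr.symm)
  simp

lemma eq_drop_of_lang9_append_xyyx {D : ℕ} {v : List (Fin 4)} (hv : v.length = D)
    (h : lang9 (v ++ xyyx D)) : v = (wzzw D).drop (D + 2) := by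
  rcases Nat.eq_zero_or_pos D with rfl | hD
  · simp_all [wzzw]
  rcases lang9_iff.mp h D hD v [] (by simp) with hvw | hwv
  · rw [List.suffix_iff_eq_drop.mp hvw, wzzw_length, hv]
    congr 1
    omega
  · have := hwv.length_le
    rw [wzzw_length] at this
    omega

/-- a recurrent word with asymmetric prolongation behaviour. There is a
recurrent bi-infinite word `Ω` over `{w, x, y, z}` (encoded as `0, 1, 2, 3` in `Fin 4`)
such that (i) for every factor `u` of `Ω`, both `u ++ [w]` and `u ++ [z]` are factors of
`Ω`; (ii) for every `D ∈ ℕ` there is a factor `u` of `Ω` with a unique length-`D` left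
extension `v` (i.e. exactly one `v` of length `D` with `v ++ u` a factor of `Ω`); and
moreover `Ω` can be taken so that its finite factors are exactly the words of the
language `lang9`. -/
theorem stmt9 : ∃ Ω : ℤ → Fin 4, RecurrentZ Ω ∧
    (∀ u : List (Fin 4), FactorZ u Ω → FactorZ (u ++ [0]) Ω ∧ FactorZ (u ++ [3]) Ω) ∧
    (∀ D : ℕ, ∃ u : List (Fin 4), FactorZ u Ω ∧
      ∃! v : List (Fin 4), v.length = D ∧ FactorZ (v ++ u) Ω) ∧
    (∀ u : List (Fin 4), FactorZ u Ω ↔ lang9 u) := by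
  obtain ⟨Ω, hrec, hfac⟩ := lang9_isIrreducibleLanguage.exists_recurrentZ_factorZ_iff
  refine ⟨Ω, hrec, fun u hu => ?_, fun D => ?_, hfac⟩
  · simp only [hfac] at hu ⊢
    exact ⟨lang9_append_singleton hu (by simp), lang9_append_singleton hu (by simp)⟩
  · have hguard := (isGuarded_wzzw_append_xyyx D).lang9
    have hinfix : (wzzw D).drop (D + 2) ++ xyyx D <:+: wzzw D ++ xyyx D :=
      ⟨(wzzw D).take (D + 2), [], by simp [← List.append_assoc]⟩
    simp only [hfac]
    refine ⟨xyyx D, lang9_of_infix (List.suffix_append _ _).isInfix hguard, (wzzw D).drop (D + 2),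
      ⟨by simp [wzzw_length]; omega, lang9_of_infix hinfix hguard⟩, ?_⟩
    rintro v ⟨hv, hvu⟩
    exact eq_drop_of_lang9_append_xyyx hv hvu

end Paper
end
end

section
/- Let K be a field, let S = ⋃_{k≥1} {10^k·n + k − 1 : n ≥ 1} ⊆ ℕ, and let A = K⟨x_1, x_2, x_3⟩/I, where I is the two-sided ideal generated by all monomials that do not occur as a factor of any right-infinite word x_{ε_1} x_{ε_2} x_{ε_3} ⋯ with ε_i ∈ {1,2,3} for all i and ε_i = 1 if and only if i ∈ S. Then A is a monomial algebra of exponential growth (there exist β > 1 and n_0 such that the K-dimension of the span of the nonzero monomials of A of length at most n is at least β^n for all n ≥ n_0), and A contains no noncommutative free subalgebra: for all a, b ∈ A, the unique K-algebra homomorphism from the free associative unital K-algebra on two generators X, Y with X ↦ a, Y ↦ b is not injective. -/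
noncomputable section

namespace Paper

open Module

/-- The set `S = ⋃_{k ≥ 1} {10^k · n + k − 1 : n ≥ 1}`. -/
def Sset : Set ℕ := {m : ℕ | ∃ k, 1 ≤ k ∧ ∃ n, 1 ≤ n ∧ m = 10 ^ k * n + k - 1}

/-- A word over the alphabet `{x_1, x_2, x_3}` (encoded as `{0, 1, 2} = Fin 3`) is *good*
if it occurs as a factor of some right-infinite word `x_{ε_1} x_{ε_2} x_{ε_3} ⋯` with
`ε_i = 1` (i.e. `ε i = 0` in our encoding) if and only if `i ∈ S`. -/
def goodWord (w : List (Fin 3)) : Prop :=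
  ∃ ε : ℕ → Fin 3, (∀ i : ℕ, 1 ≤ i → (ε i = 0 ↔ i ∈ Sset)) ∧
    ∃ t : ℕ, ∀ j : Fin w.length, w.get j = ε (t + (j : ℕ) + 1)

/-!
Commutators are nilpotent in `A`. A word in `x₁` alone contributes equally to `x y` and `y x`,
so every word in the support of a commutator `[x, y]` of the free algebra contains `x₂` or `x₃`.
If these words have length at most `L`, no word of `[x, y] ^ m` contains `x₁ ^ (2 L + 1)`, and
all of them have length at least `m`. But `S` contains a run of `2 L + 1` consecutive integers in
every interval of length `10 ^ (2 L + 1)`, so every good word of length at least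
`10 ^ (2 L + 1) + 2 L + 1` contains `x₁ ^ (2 L + 1)`. Hence `[a, b] ^ m = 0` in `A` for large `m`,
whereas `[X, Y]` is not nilpotent in `K⟨X, Y⟩`: its image `diag(1, -1)` in `M₂(K)` is a unit.

For the growth, at most `n / 9` of the positions `1, …, n` lie in `S`, each of the other
positions may carry `x₂` or `x₃`, and distinct good words stay linearly independent in `A`; so
the monomials of length at most `n` span a space of dimension at least `2 ^ (8 n / 9) ≥ √2 ^ n`.
-/

open scoped Pointwise

section Words

variable {α : Type*}

theorem length_le_length_flatten {ws : List (List α)} (hws : ∀ w ∈ ws, w ≠ []) :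
    ws.length ≤ ws.flatten.length := by
  rw [List.length_flatten]
  simpa using List.length_le_sum_of_one_le (ws.map List.length)
    (by simpa [List.length_pos_iff, Nat.one_le_iff_ne_zero] using hws)

theorem not_replicate_infix_flatten {a : α} {L : ℕ} :
    ∀ ws : List (List α), (∀ w ∈ ws, w.length ≤ L ∧ ∃ x ∈ w, x ≠ a) →
      ¬ List.replicate (2 * L + 1) a <:+: ws.flatten
  | [], _, h => by simpa using h.length_le
  | w :: rest, hws, h => by
    obtain ⟨hw, -⟩ := hws w List.mem_cons_self
    rw [List.flatten_cons, List.infix_append_iff] at h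
    rcases h with h | h | ⟨l₁, l₂, hl, hl₁, hl₂⟩
    · have := h.length_le
      simp only [List.length_replicate] at this
      omega
    · exact not_replicate_infix_flatten rest (fun v hv => hws v (List.mem_cons_of_mem _ hv)) h
    · obtain ⟨hlen, -, hl₂a⟩ := List.append_eq_replicate_iff.1 hl.symm
      have := hl₁.length_le
      cases rest with
      | nil =>
        have := hl₂.length_le
        simp only [List.flatten_nil, List.length_nil] at this
        omega
      | cons w₁ rest =>
        obtain ⟨hw₁, x, hx, hxa⟩ := hws w₁ (by simp)
        have hpre : w₁ <+: l₂ :=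
          List.prefix_of_prefix_length_le (List.prefix_append w₁ _) hl₂ (by omega)
        rw [hl₂a] at hpre
        exact hxa (List.eq_of_mem_replicate (hpre.subset hx))

theorem exists_flatten_eq_of_mem_pow {T : Set (FreeMonoid α)} {m : ℕ} {u : FreeMonoid α}
    (hu : u ∈ T ^ m) :
    ∃ ws : List (List α), ws.length = m ∧ (∀ w ∈ ws, FreeMonoid.ofList w ∈ T) ∧
      u.toList = ws.flatten := by
  obtain ⟨f, rfl⟩ := Set.mem_pow.1 hu
  refine ⟨List.ofFn fun i => (f i : FreeMonoid α).toList, List.length_ofFn, ?_, ?_⟩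
  · simp only [List.mem_ofFn]
    rintro _ ⟨i, rfl⟩
    exact (f i).2
  · simp [FreeMonoid.toList_prod, List.map_ofFn, Function.comp_def]

theorem mul_swap_eq_of_forall_mem_eq {u a b : FreeMonoid α} {c : α}
    (hu : ∀ x ∈ u.toList, x = c) (h : a * b = u) : b * a = u := by
  subst h
  simp only [FreeMonoid.toList_mul, List.mem_append] at hu
  have ha : a.toList = List.replicate a.toList.length c :=
    List.eq_replicate_iff.2 ⟨rfl, fun x hx => hu x (Or.inl hx)⟩
  have hb : b.toList = List.replicate b.toList.length c :=
    List.eq_replicate_iff.2 ⟨rfl, fun x hx => hu x (Or.inr hx)⟩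
  apply FreeMonoid.toList.injective
  rw [FreeMonoid.toList_mul, FreeMonoid.toList_mul, ha, hb, List.replicate_append_replicate,
    List.replicate_append_replicate, Nat.add_comm]

end Words

theorem coeff_commutator_eq_zero {k M : Type*} [CommRing k] [Monoid M]
    (x y : MonoidAlgebra k M) {u : M} (hu : ∀ a b, a * b = u → b * a = u) :
    (x * y - y * x).coeff u = 0 := by
  classical
  rw [MonoidAlgebra.coeff_sub, Finsupp.sub_apply, MonoidAlgebra.coeff_mul,
    MonoidAlgebra.coeff_mul, Finsupp.sum_comm, sub_eq_zero]
  refine Finsupp.sum_congr fun a _ => Finsupp.sum_congr fun b _ => ?_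
  by_cases h : a * b = u
  · rw [if_pos h, if_pos (hu a b h), mul_comm]
  · rw [if_neg h, if_neg fun h' => h (hu b a h')]

theorem exists_ne_zero_of_mem_support_commutator {K : Type} [Field K]
    (x y : FreeAlg K (Fin 3)) {u : FreeMonoid (Fin 3)} (hu : u ∈ (x * y - y * x).coeff.support) :
    ∃ i ∈ u.toList, i ≠ 0 := by
  by_contra! h
  exact Finsupp.mem_support_iff.1 hu
    (coeff_commutator_eq_zero x y fun _ _ => mul_swap_eq_of_forall_mem_eq h)

theorem exists_run_subset_Sset (j t : ℕ) :
    ∃ r, t < r ∧ r ≤ t + 10 ^ j ∧ ∀ i < j, r + i ∈ Sset := by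
  -- the next multiple `r` of `10 ^ j`: `r + i = 10 ^ (i + 1) * (r / 10 ^ (i + 1)) + (i + 1) - 1`
  refine ⟨10 ^ j * (t / 10 ^ j + 1), ?_, ?_, fun i hi => ?_⟩
  · have := Nat.lt_mul_div_succ t (by positivity : 0 < 10 ^ j)
    omega
  · have := Nat.mul_div_le t (10 ^ j)
    rw [mul_add, mul_one]
    omega
  · refine ⟨i + 1, by omega, 10 ^ (j - (i + 1)) * (t / 10 ^ j + 1),
      Nat.one_le_iff_ne_zero.2 (by positivity), ?_⟩
    rw [← mul_assoc, ← pow_add, Nat.add_sub_cancel' hi]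
    omega

theorem replicate_infix_of_goodWord {w : List (Fin 3)} (hw : goodWord w) {j : ℕ}
    (hj : 10 ^ j + j ≤ w.length) : List.replicate j 0 <:+: w := by
  obtain ⟨ε, hε, t, hwε⟩ := hw
  obtain ⟨r, htr, hrt, hrS⟩ := exists_run_subset_Sset j t
  rw [List.infix_iff_getElem?]
  refine ⟨r - (t + 1), by simp only [List.length_replicate]; omega, fun i hi => ?_⟩
  rw [List.length_replicate] at hi
  have hlt : i + (r - (t + 1)) < w.length := by omega
  have := hwε ⟨_, hlt⟩
  simp only [List.get_eq_getElem] at this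
  rw [List.getElem?_eq_getElem hlt, List.getElem_replicate, this,
    show t + (i + (r - (t + 1))) + 1 = r + i by omega]
  exact congrArg some ((hε _ (by omega)).2 (hrS i hi))

theorem not_goodWord_flatten {L : ℕ} (ws : List (List (Fin 3)))
    (hws : ∀ w ∈ ws, w.length ≤ L ∧ ∃ x ∈ w, x ≠ 0)
    (hlen : 10 ^ (2 * L + 1) + (2 * L + 1) ≤ ws.length) : ¬ goodWord ws.flatten := fun hgood =>
  not_replicate_infix_flatten ws hws <| replicate_infix_of_goodWord hgood <| hlen.trans <|
    length_le_length_flatten fun w hw => List.ne_nil_of_mem (hws w hw).2.choose_spec.1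

theorem isNilpotent_commutator {K : Type} [Field K] {A : Type} [Ring A] [Algebra K A]
    (π : FreeAlg K (Fin 3) →ₐ[K] A) (hsurj : Function.Surjective π)
    (hker : ∀ a ∈ Submodule.span K
        {m : FreeAlg K (Fin 3) | ∃ w : List (Fin 3), m = wrd K w ∧ ¬ goodWord w}, π a = 0)
    (a b : A) : IsNilpotent (a * b - b * a) := by
  obtain ⟨x, rfl⟩ := hsurj a
  obtain ⟨y, rfl⟩ := hsurj b
  set c := x * y - y * x
  set L := c.coeff.support.sup fun u => u.toList.length
  set T : Set (FreeMonoid (Fin 3)) := {u | u.toList.length ≤ L ∧ ∃ i ∈ u.toList, i ≠ 0}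
  set m := 10 ^ (2 * L + 1) + (2 * L + 1)
  have hcT : c ∈ Submodule.span K (MonoidAlgebra.of K _ '' T) :=
    Submodule.span_mono (Set.image_mono (show (c.coeff.support : Set _) ⊆ T from fun u hu =>
        ⟨Finset.le_sup (f := fun u => u.toList.length) hu,
          exists_ne_zero_of_mem_support_commutator x y hu⟩))
      (MonoidAlgebra.mem_span_support_coeff c)
  have hcm : c ^ m ∈ Submodule.span K (MonoidAlgebra.of K _ '' T ^ m) := by
    rw [Set.image_pow, ← Submodule.span_pow]
    exact Submodule.pow_mem_pow _ hcT m
  have hbad : MonoidAlgebra.of K _ '' T ^ m ⊆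
      {m : FreeAlg K (Fin 3) | ∃ w : List (Fin 3), m = wrd K w ∧ ¬ goodWord w} := by
    rintro _ ⟨u, hu, rfl⟩
    obtain ⟨ws, hlen, hws, hu⟩ := exists_flatten_eq_of_mem_pow hu
    exact ⟨u.toList, rfl, hu ▸ not_goodWord_flatten ws hws hlen.ge⟩
  refine ⟨m, ?_⟩
  rw [← map_mul, ← map_mul, ← map_sub, ← map_pow]
  exact hker _ (Submodule.span_mono hbad hcm)

theorem not_isNilpotent_commutator_freeAlgebra {R ι : Type*} [CommRing R] [Nontrivial R]
    {i j : ι} (hij : i ≠ j) :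
    ¬ IsNilpotent
      (FreeAlgebra.ι R i * FreeAlgebra.ι R j - FreeAlgebra.ι R j * FreeAlgebra.ι R i) := by
  classical
  set f := FreeAlgebra.lift R
    (fun k => if k = i then !![0, 1; 0, 0] else !![0, 0; 1, 0] : ι → Matrix (Fin 2) (Fin 2) R)
  have hf : f (FreeAlgebra.ι R i * FreeAlgebra.ι R j - FreeAlgebra.ι R j * FreeAlgebra.ι R i) =
      !![1, 0; 0, -1] := by
    simp [f, hij.symm]
  have hsq : (!![1, 0; 0, -1] : Matrix (Fin 2) (Fin 2) R) * !![1, 0; 0, -1] = 1 := by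
    simp [Matrix.one_fin_two]
  intro h
  have := h.map f
  rw [hf] at this
  exact IsUnit.not_isNilpotent ⟨⟨_, _, hsq, hsq⟩, rfl⟩ this

theorem linearIndependent_wrd (K : Type) [Field K] {σ : Type} :
    LinearIndependent K (wrd K : List σ → FreeAlg K σ) := by
  convert (MonoidAlgebra.basis (FreeMonoid σ) K).linearIndependent.comp _
    FreeMonoid.ofList.injective
  funext w
  simp [wrd, MonoidAlgebra.of_apply]

theorem linearIndependent_π_wrd {K : Type} [Field K] {σ A : Type} [Ring A] [Algebra K A]
    (π : FreeAlg K σ →ₐ[K] A) (P : List σ → Prop)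
    (hker : ∀ a : FreeAlg K σ, π a = 0 →
      a ∈ Submodule.span K {m : FreeAlg K σ | ∃ w : List σ, m = wrd K w ∧ ¬ P w}) :
    LinearIndependent K (fun w : {w // P w} => π (wrd K w)) := by
  have hli := linearIndependent_wrd K (σ := σ)
  have hkerπ : LinearMap.ker π.toLinearMap ≤ Submodule.span K (wrd K '' {w | ¬ P w}) := by
    intro a ha
    convert hker a ha using 2
    ext m
    simp [eq_comm, and_comm]
  refine (hli.comp Subtype.val Subtype.val_injective).map (f := π.toLinearMap) ?_
  rw [Set.range_comp, Subtype.range_coe_subtype]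
  exact (hli.disjoint_span_image (s := {w | P w}) (t := {w | ¬ P w})
    (Set.disjoint_left.2 fun w hw hw' => hw' hw)).mono_right hkerπ

theorem nine_mul_sum_div_pow_ten_le (N n : ℕ) :
    9 * ∑ k ∈ Finset.range N, n / 10 ^ (k + 1) ≤ n := by
  induction N generalizing n with
  | zero => simp
  | succ N ih =>
    rw [Finset.sum_range_succ']
    have hshift : ∑ k ∈ Finset.range N, n / 10 ^ (k + 1 + 1) =
        ∑ k ∈ Finset.range N, n / 10 / 10 ^ (k + 1) := by
      refine Finset.sum_congr rfl fun k _ => ?_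
      rw [Nat.div_div_eq_div_mul, pow_succ' 10 (k + 1)]
    have := ih (n / 10)
    have := Nat.div_mul_le_self n 10
    omega

open Classical in
theorem nine_mul_card_filter_succ_mem_Sset_le (n : ℕ) :
    9 * ((Finset.range n).filter fun j => j + 1 ∈ Sset).card ≤ n := by
  have hcover : (Finset.range n).filter (fun j => j + 1 ∈ Sset) ⊆ (Finset.range n).biUnion
      fun k => (Finset.Icc 1 (n / 10 ^ (k + 1))).image fun q => 10 ^ (k + 1) * q + k - 1 := by
    intro j hj
    rw [Finset.mem_filter, Finset.mem_range] at hj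
    obtain ⟨hjn, k, hk, q, hq, hjkq⟩ := hj
    obtain ⟨k, rfl⟩ : ∃ k', k = k' + 1 := ⟨k - 1, by omega⟩
    have hle : 1 ≤ 10 ^ (k + 1) * q := Nat.one_le_iff_ne_zero.2 (by positivity)
    simp only [Finset.mem_biUnion, Finset.mem_range, Finset.mem_image, Finset.mem_Icc]
    refine ⟨k, by omega, q, ⟨hq, ?_⟩, by omega⟩
    rw [Nat.le_div_iff_mul_le (by positivity), mul_comm]
    omega
  calc 9 * ((Finset.range n).filter fun j => j + 1 ∈ Sset).card
      ≤ 9 * ∑ k ∈ Finset.range n, n / 10 ^ (k + 1) := by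
        gcongr
        refine (Finset.card_le_card hcover).trans (Finset.card_biUnion_le.trans ?_)
        refine Finset.sum_le_sum fun k _ => Finset.card_image_le.trans ?_
        simp
    _ ≤ n := nine_mul_sum_div_pow_ten_le n n

open Classical in
def freePositions (n : ℕ) : Finset ℕ := (Finset.range n).filter fun j => j + 1 ∉ Sset

theorem mem_freePositions {n j : ℕ} : j ∈ freePositions n ↔ j < n ∧ j + 1 ∉ Sset := by
  simp [freePositions]

theorem le_two_mul_card_freePositions (n : ℕ) : n ≤ 2 * (freePositions n).card := by
  classical
  have hsplit :
      ((Finset.range n).filter fun j => j + 1 ∈ Sset).card + (freePositions n).card = n := by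
    rw [freePositions, Finset.card_filter_add_card_filter_not, Finset.card_range]
  have := nine_mul_card_filter_succ_mem_Sset_le n
  omega

/-- The prefix of length `n` of an admissible infinite word: `x₁` at the positions in `S`, and
`x₂` or `x₃`, as chosen by `g`, at the others. -/
def choiceWord (n : ℕ) (g : freePositions n → Bool) : List (Fin 3) :=
  List.ofFn fun j : Fin n =>
    if h : (j : ℕ) ∈ freePositions n then (if g ⟨j, h⟩ then 1 else 2) else 0

theorem length_choiceWord (n : ℕ) (g : freePositions n → Bool) :
    (choiceWord n g).length = n :=
  List.length_ofFn

theorem goodWord_of_getElem_eq_zero_iff {w : List (Fin 3)}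
    (hw : ∀ j (hj : j < w.length), w[j] = 0 ↔ j + 1 ∈ Sset) : goodWord w := by
  classical
  refine ⟨fun i => if i ∈ Sset then 0 else w[i - 1]?.getD 1, fun i hi => ?_, 0, fun j => ?_⟩
  · by_cases hS : i ∈ Sset
    · simp [hS]
    · simp only [hS, if_false, iff_false]
      rcases lt_or_ge (i - 1) w.length with h | h
      · rw [List.getElem?_eq_getElem h, Option.getD_some, hw _ h, Nat.sub_add_cancel hi]
        exact hS
      · simp [List.getElem?_eq_none h]
  · by_cases hS : (j : ℕ) + 1 ∈ Sset
    · simp [hS, (hw j j.2).2 hS]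
    · simp [hS]

theorem goodWord_choiceWord (n : ℕ) (g : freePositions n → Bool) :
    goodWord (choiceWord n g) := by
  refine goodWord_of_getElem_eq_zero_iff fun j hj => ?_
  rw [length_choiceWord] at hj
  simp only [choiceWord, List.getElem_ofFn]
  by_cases h : j ∈ freePositions n
  · simp only [h, dif_pos, (mem_freePositions.1 h).2, iff_false]
    split <;> decide
  · have hS : j + 1 ∈ Sset := by simpa [mem_freePositions, hj] using h
    simp [h, hS]

theorem choiceWord_injective (n : ℕ) : Function.Injective (choiceWord n) := by
  intro g g' h
  funext ⟨j, hj⟩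
  have hjn : j < n := (mem_freePositions.1 hj).1
  have := congrFun (List.ofFn_inj.1 h) ⟨j, hjn⟩
  simp only [hj, dif_pos] at this
  cases hg : g ⟨j, hj⟩ <;> cases hg' : g' ⟨j, hj⟩ <;> simp_all

theorem two_pow_card_freePositions_le_finrank {K : Type} [Field K] {A : Type} [Ring A]
    [Algebra K A] (π : FreeAlg K (Fin 3) →ₐ[K] A)
    (hker : ∀ a : FreeAlg K (Fin 3), π a = 0 →
      a ∈ Submodule.span K
        {m : FreeAlg K (Fin 3) | ∃ w : List (Fin 3), m = wrd K w ∧ ¬ goodWord w}) (n : ℕ) :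
    2 ^ (freePositions n).card ≤ finrank K (Submodule.span K
      {a : A | ∃ w : List (Fin 3), w.length ≤ n ∧ a = π (wrd K w)}) := by
  have hfin : FiniteDimensional K (Submodule.span K
      {a : A | ∃ w : List (Fin 3), w.length ≤ n ∧ a = π (wrd K w)}) := by
    have : {a : A | ∃ w : List (Fin 3), w.length ≤ n ∧ a = π (wrd K w)} =
        (fun w => π (wrd K w)) '' {w | w.length ≤ n} := by
      ext a
      simp [eq_comm]
    rw [this]
    exact FiniteDimensional.span_of_finite K ((List.finite_length_le _ n).image _)
  have hli : LinearIndependent K fun g => π (wrd K (choiceWord n g)) :=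
    (linearIndependent_π_wrd π goodWord hker).comp (fun g => ⟨_, goodWord_choiceWord n g⟩)
      fun g g' h => choiceWord_injective n (congrArg Subtype.val h)
  calc 2 ^ (freePositions n).card = Fintype.card (freePositions n → Bool) := by simp
    _ = finrank K (Submodule.span K (Set.range fun g => π (wrd K (choiceWord n g)))) :=
        (finrank_span_eq_card hli).symm
    _ ≤ _ := Submodule.finrank_mono <| Submodule.span_mono <| Set.range_subset_iff.2 fun g =>
        Set.mem_ofPred.2 ⟨choiceWord n g, (length_choiceWord n g).le, rfl⟩

/-- a monomial algebra of exponential growth without free subalgebras.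
Let `A = K⟨x_1, x_2, x_3⟩ / I` where `I` is the ideal generated (equivalently, spanned) by
the monomials that are not factors of any of the admissible infinite words above. Then `A`
has exponential growth, while for any `a, b ∈ A` the `K`-algebra homomorphism from the
free algebra on two generators sending them to `a`, `b` is not injective. -/
theorem stmt14 (K : Type) [Field K]
    (A : Type) [Ring A] [Algebra K A] (π : FreeAlg K (Fin 3) →ₐ[K] A)
    (hsurj : Function.Surjective π)
    (hker : ∀ a : FreeAlg K (Fin 3), π a = 0 ↔
      a ∈ Submodule.span K
        {m : FreeAlg K (Fin 3) | ∃ w : List (Fin 3), m = wrd K w ∧ ¬ goodWord w}) :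
    -- exponential growth
    (∃ β : ℝ, 1 < β ∧ ∃ n₀ : ℕ, ∀ n : ℕ, n₀ ≤ n →
      β ^ n ≤ (finrank K (Submodule.span K
        {a : A | ∃ w : List (Fin 3), w.length ≤ n ∧ a = π (wrd K w)}) : ℝ)) ∧
    -- no noncommutative free subalgebras
    (∀ a b : A, ¬ Function.Injective
      (FreeAlgebra.lift K (![a, b] : Fin 2 → A) : FreeAlgebra K (Fin 2) →ₐ[K] A)) := by
  refine ⟨⟨√2, Real.one_lt_sqrt_two, 0, fun n _ => ?_⟩, fun a b hinj => ?_⟩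
  · calc √2 ^ n ≤ √2 ^ (2 * (freePositions n).card) :=
          pow_le_pow_right₀ Real.one_lt_sqrt_two.le (le_two_mul_card_freePositions n)
      _ = 2 ^ (freePositions n).card := by rw [pow_mul, Real.sq_sqrt zero_le_two]
      _ ≤ _ := by exact_mod_cast two_pow_card_freePositions_le_finrank π (fun a => (hker a).1) n
  · apply not_isNilpotent_commutator_freeAlgebra (R := K) (zero_ne_one : (0 : Fin 2) ≠ 1)
    rw [← IsNilpotent.map_iff hinj]
    simpa using isNilpotent_commutator π hsurj (fun a => (hker a).2) a b

end Paper
end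
end

section
/- Let S = ⋃_{k≥1} {10^k·n + k − 1 : n ≥ 1} ⊆ ℕ. Then for every k ≥ 1 and every d ≥ 0, the interval {d+1, d+2, …, d+2·10^k} contains k consecutive integers all belonging to S; more precisely, there exists n ≥ 1 such that {n·10^k, n·10^k + 1, …, n·10^k + (k−1)} ⊆ {d+1, …, d+2·10^k} and n·10^k + j ∈ S for every 0 ≤ j ≤ k−1. -/
/-! The block starts at the least multiple `n·10^k` of `10^k` exceeding `d`, which is at most
`d + 10^k`. Since `10^(j+1) ∣ n·10^k` for `j < k`, writing `n·10^k = 10^(j+1)·m` shows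
`n·10^k + j = 10^(j+1)·m + (j+1) − 1 ∈ S`. -/

/-- The set `S = ⋃_{k ≥ 1} {10^k · n + k − 1 : n ≥ 1}`. -/
def Sset : Set ℕ := {m : ℕ | ∃ k, 1 ≤ k ∧ ∃ n, 1 ≤ n ∧ m = 10 ^ k * n + k - 1}

theorem add_mem_Sset_of_pow_dvd {m j : ℕ} (hm : m ≠ 0) (hdvd : 10 ^ (j + 1) ∣ m) :
    m + j ∈ Sset := by
  obtain ⟨c, rfl⟩ := hdvd
  refine ⟨j + 1, j.succ_pos, c, Nat.pos_of_ne_zero (right_ne_zero_of_mul hm), ?_⟩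
  omega

theorem lt_div_add_one_mul (d : ℕ) {b : ℕ} (hb : 0 < b) : d < (d / b + 1) * b := by
  rw [add_one_mul]
  exact Nat.lt_div_mul_add hb

theorem div_add_one_mul_le (d b : ℕ) : (d / b + 1) * b ≤ d + b := by
  rw [add_one_mul]
  exact Nat.add_le_add_right (Nat.div_mul_le_self d b) b

/-- For every `k ≥ 1` and every `d ≥ 0`, the interval
`{d+1, …, d + 2·10^k}` contains `k` consecutive integers all belonging to `S`:
there is `n ≥ 1` with `{n·10^k, …, n·10^k + (k−1)} ⊆ {d+1, …, d + 2·10^k}` and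
`n·10^k + j ∈ S` for all `0 ≤ j ≤ k−1`. -/
theorem stmt15 : ∀ k : ℕ, 1 ≤ k → ∀ d : ℕ, ∃ n : ℕ, 1 ≤ n ∧
    d + 1 ≤ n * 10 ^ k ∧ n * 10 ^ k + (k - 1) ≤ d + 2 * 10 ^ k ∧
    ∀ j : ℕ, j ≤ k - 1 → n * 10 ^ k + j ∈ Sset := by
  intro k hk d
  have hpos : 0 < 10 ^ k := by positivity
  have hk_lt : k < 10 ^ k := Nat.lt_pow_self (by norm_num)
  refine ⟨d / 10 ^ k + 1, Nat.le_add_left 1 _, lt_div_add_one_mul d hpos, ?_, ?_⟩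
  · have := div_add_one_mul_le d (10 ^ k)
    omega
  · intro j hj
    refine add_mem_Sset_of_pow_dvd (Nat.mul_ne_zero (Nat.succ_ne_zero _) hpos.ne') ?_
    exact Dvd.dvd.mul_left (pow_dvd_pow 10 (by omega)) _
end
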